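/- arXiv:1303.6263 — 2 statements merged into one kernel-verified Lean document; each statement's English description precedes it below -/
import Mathlib

section
/- Let L be a pseudo-Finsler metric on a conic domain A over Ω ⊆ ℝⁿ and let Γ be a Chern connection of (L,A). Let γ : I → Ω be a smooth curve on an open interval I, let W : I → ℝⁿ be an L-admissible field along γ, and let X, Y : I → ℝⁿ be smooth fields along γ. Then for all t ∈ I, (d/dt) g_{(γ(t),W(t))}(X(t), Y(t)) = g_{(γ(t),W(t))}((D^W_γ X)(t), Y(t)) + g_{(γ(t),W(t))}(X(t), (D^W_γ Y)(t)) + 2 C_{(γ(t),W(t))}((D^W_γ W)(t), X(t), Y(t)). -/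
noncomputable section

open scoped Topology

/-- Vectors in `ℝⁿ`. -/
abbrev Vec (n : ℕ) := Fin n → ℝ

/-- Continuous bilinear maps `ℝⁿ × ℝⁿ → ℝⁿ` (as iterated continuous linear maps). -/
abbrev Bil (n : ℕ) := Vec n →L[ℝ] Vec n →L[ℝ] Vec n

/-- The fundamental tensor of `L`:
`g_{(x,v)}(u,w) = ½ ∂²/∂t∂s L(x, v + t u + s w)|₀`. -/
def gF {n : ℕ} (L : Vec n × Vec n → ℝ) (x v u w : Vec n) : ℝ :=
  (1 / 2) * deriv (fun t : ℝ => deriv (fun s : ℝ => L (x, v + t • u + s • w)) 0) 0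

/-- The Cartan tensor of `L`:
`C_{(x,v)}(w₁,w₂,w₃) = ¼ ∂³/∂s₁∂s₂∂s₃ L(x, v + s₁w₁ + s₂w₂ + s₃w₃)|₀`. -/
def CartanF {n : ℕ} (L : Vec n × Vec n → ℝ) (x v w₁ w₂ w₃ : Vec n) : ℝ :=
  (1 / 4) * deriv (fun s₁ : ℝ => deriv (fun s₂ : ℝ => deriv (fun s₃ : ℝ =>
    L (x, v + s₁ • w₁ + s₂ • w₂ + s₃ • w₃)) 0) 0) 0

/-- `L` is a pseudo-Finsler metric on the conic domain `A ⊆ Ω × (ℝⁿ \ {0})`. -/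
structure IsPseudoFinsler {n : ℕ} (Ω : Set (Vec n)) (A : Set (Vec n × Vec n))
    (L : Vec n × Vec n → ℝ) : Prop where
  isOpen_base : IsOpen Ω
  isOpen_dom : IsOpen A
  dom_subset : ∀ p ∈ A, p.1 ∈ Ω ∧ p.2 ≠ 0
  conic : ∀ p ∈ A, ∀ lam : ℝ, 0 < lam → (p.1, lam • p.2) ∈ A
  smooth : ContDiffOn ℝ (⊤ : ℕ∞) L A
  homogeneous : ∀ p ∈ A, ∀ lam : ℝ, 0 < lam → L (p.1, lam • p.2) = lam ^ 2 * L p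
  g_symm : ∀ p ∈ A, ∀ u w, gF L p.1 p.2 u w = gF L p.1 p.2 w u
  g_add_left : ∀ p ∈ A, ∀ u₁ u₂ w,
    gF L p.1 p.2 (u₁ + u₂) w = gF L p.1 p.2 u₁ w + gF L p.1 p.2 u₂ w
  g_smul_left : ∀ p ∈ A, ∀ (c : ℝ) u w, gF L p.1 p.2 (c • u) w = c * gF L p.1 p.2 u w
  g_nondeg : ∀ p ∈ A, ∀ u, (∀ w, gF L p.1 p.2 u w = 0) → u = 0

/-- The affine connection associated to a connection datum `Γ`:
`(∇_X Y)(x) = (dY)_x(X(x)) + Γ(x)(X(x), Y(x))`. -/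
def nablaVF {n : ℕ} (Γ : Vec n → Bil n) (X Y : Vec n → Vec n) (x : Vec n) : Vec n :=
  fderiv ℝ Y x (X x) + Γ x (X x) (Y x)

/-- A connection datum is torsion-free on `Ω` if its values are symmetric bilinear maps. -/
def TorsionFree {n : ℕ} (Ω : Set (Vec n)) (Γ : Vec n → Bil n) : Prop :=
  ∀ x ∈ Ω, ∀ u w, Γ x u w = Γ x w u

/-- A vector field `V` on `Ω` is `L`-admissible if it is smooth and takes values in `A`. -/
def LAdmissible {n : ℕ} (A : Set (Vec n × Vec n)) (Ω : Set (Vec n))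
    (V : Vec n → Vec n) : Prop :=
  ContDiffOn ℝ (⊤ : ℕ∞) V Ω ∧ ∀ x ∈ Ω, (x, V x) ∈ A

/-- A connection datum `Γ` on `Ω` is almost `g`-compatible with reference `V`:
`X(g_V(Y,Z)) = g_V(∇_X Y, Z) + g_V(Y, ∇_X Z) + 2 C_V(∇_X V, Y, Z)`. -/
def AlmostGCompatible {n : ℕ} (L : Vec n × Vec n → ℝ) (Ω : Set (Vec n))
    (Γ : Vec n → Bil n) (V : Vec n → Vec n) : Prop :=
  ∀ X Y Z : Vec n → Vec n,
    ContDiffOn ℝ (⊤ : ℕ∞) X Ω → ContDiffOn ℝ (⊤ : ℕ∞) Y Ω → ContDiffOn ℝ (⊤ : ℕ∞) Z Ω →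
    ∀ x ∈ Ω,
      fderiv ℝ (fun y => gF L y (V y) (Y y) (Z y)) x (X x) =
        gF L x (V x) (nablaVF Γ X Y x) (Z x) + gF L x (V x) (Y x) (nablaVF Γ X Z x)
          + 2 * CartanF L x (V x) (nablaVF Γ X V x) (Y x) (Z x)

/-- Lie bracket of vector fields: `[X,Y](x) = (dY)_x(X(x)) − (dX)_x(Y(x))`. -/
def lieVF {n : ℕ} (X Y : Vec n → Vec n) (x : Vec n) : Vec n :=
  fderiv ℝ Y x (X x) - fderiv ℝ X x (Y x)

/-- Curvature tensor of a connection datum: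
`R(X,Y)Z = ∇_X∇_Y Z − ∇_Y∇_X Z − ∇_{[X,Y]}Z`. -/
def curvVF {n : ℕ} (Γ : Vec n → Bil n) (X Y Z : Vec n → Vec n) (x : Vec n) : Vec n :=
  nablaVF Γ X (nablaVF Γ Y Z) x - nablaVF Γ Y (nablaVF Γ X Z) x
    - nablaVF Γ (lieVF X Y) Z x

/-- Covariant derivative of the Cartan tensor:
`(∇^V_X C_V)(Y,Z,W)(x)`. -/
def nablaCartan {n : ℕ} (L : Vec n × Vec n → ℝ) (Γ : Vec n → Bil n)
    (V X Y Z W : Vec n → Vec n) (x : Vec n) : ℝ :=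
  fderiv ℝ (fun y => CartanF L y (V y) (Y y) (Z y) (W y)) x (X x)
    - CartanF L x (V x) (nablaVF Γ X Y x) (Z x) (W x)
    - CartanF L x (V x) (Y x) (nablaVF Γ X Z x) (W x)
    - CartanF L x (V x) (Y x) (Z x) (nablaVF Γ X W x)

/-- The tensor
`B^V(X,Y,Z,W) = (∇^V_Y C_V)(∇_X V, Z, W) − (∇^V_X C_V)(∇_Y V, Z, W) + C_V(R^V(Y,X)V, Z, W)`. -/
def BTensor {n : ℕ} (L : Vec n × Vec n → ℝ) (Γ : Vec n → Bil n)
    (V X Y Z W : Vec n → Vec n) (x : Vec n) : ℝ :=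
  nablaCartan L Γ V Y (nablaVF Γ X V) Z W x - nablaCartan L Γ V X (nablaVF Γ Y V) Z W x
    + CartanF L x (V x) (curvVF Γ Y X V x) (Z x) (W x)

/-- A Chern connection of `(L, A)`: a smooth family of symmetric bilinear maps on `A` which,
for every open `U` and every `L`-admissible smooth vector field `V` on `U`, yields a
torsion-free, almost `g`-compatible connection datum `x ↦ Γ(x, V(x))`. -/
def IsChernConnection {n : ℕ} (L : Vec n × Vec n → ℝ) (A : Set (Vec n × Vec n))
    (Γc : Vec n × Vec n → Bil n) : Prop :=
  ContDiffOn ℝ (⊤ : ℕ∞) Γc A ∧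
  (∀ p ∈ A, ∀ u w, Γc p u w = Γc p w u) ∧
  ∀ U : Set (Vec n), IsOpen U → ∀ V : Vec n → Vec n, ContDiffOn ℝ (⊤ : ℕ∞) V U →
    (∀ x ∈ U, (x, V x) ∈ A) →
    AlmostGCompatible L U (fun x => Γc (x, V x)) V

/-- Covariant derivative along a curve `γ` with reference `W`:
`(D^W_γ X)(t) = X'(t) + Γ(γ(t), W(t))(γ'(t), X(t))`. -/
def covDer {n : ℕ} (Γc : Vec n × Vec n → Bil n) (γ W X : ℝ → Vec n) (t : ℝ) : Vec n :=
  deriv X t + Γc (γ t, W t) (deriv γ t) (X t)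

/-- Contracted hh-curvature `R_{(p,v)}(v,u)w` of the Chern connection. -/
def hhCurv {n : ℕ} (Γc : Vec n × Vec n → Bil n) (p v u w : Vec n) : Vec n :=
  fderiv ℝ Γc (p, v) (u, 0) v w - fderiv ℝ Γc (p, v) (w, 0) v u
    - fderiv ℝ Γc (p, v) (0, Γc (p, v) v u) v w
    + fderiv ℝ Γc (p, v) (0, Γc (p, v) v w) v u
    + Γc (p, v) u (Γc (p, v) v w) - Γc (p, v) w (Γc (p, v) v u)

/-- Covariant derivative along the `t`-parameter curves of a two-parameter map `Λ`,
with reference vector `∂Λ/∂t`. -/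
def DtOp {n : ℕ} (Γc : Vec n × Vec n → Bil n) (Λ X : ℝ × ℝ → Vec n) (p : ℝ × ℝ) : Vec n :=
  deriv (fun t => X (t, p.2)) p.1
    + Γc (Λ p, deriv (fun t => Λ (t, p.2)) p.1) (deriv (fun t => Λ (t, p.2)) p.1) (X p)

/-- Covariant derivative along the `s`-parameter curves of a two-parameter map `Λ`,
with reference vector `∂Λ/∂t`. -/
def DsOp {n : ℕ} (Γc : Vec n × Vec n → Bil n) (Λ X : ℝ × ℝ → Vec n) (p : ℝ × ℝ) : Vec n :=
  deriv (fun s => X (p.1, s)) p.2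
    + Γc (Λ p, deriv (fun t => Λ (t, p.2)) p.1) (deriv (fun s => Λ (p.1, s)) p.2) (X p)

namespace ChernAux

variable {n : ℕ} {A : Set (Vec n × Vec n)} {L : Vec n × Vec n → ℝ}

theorem diffAt {f : Vec n × Vec n → ℝ} (hf : ContDiffOn ℝ (⊤ : ℕ∞) f A) (hA : IsOpen A)
    {p : Vec n × Vec n} (hp : p ∈ A) : DifferentiableAt ℝ f p :=
  (hf.differentiableOn (by simp)).differentiableAt (hA.mem_nhds hp)

theorem diffAt' {F : Type*} [NormedAddCommGroup F] [NormedSpace ℝ F]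
    {f : Vec n × Vec n → F} (hf : ContDiffOn ℝ (⊤ : ℕ∞) f A) (hA : IsOpen A)
    {p : Vec n × Vec n} (hp : p ∈ A) : DifferentiableAt ℝ f p :=
  (hf.differentiableOn (by simp)).differentiableAt (hA.mem_nhds hp)

theorem smoothD1 (hL : ContDiffOn ℝ (⊤ : ℕ∞) L A) (hA : IsOpen A) :
    ContDiffOn ℝ (⊤ : ℕ∞) (fderiv ℝ L) A :=
  hL.fderiv_of_isOpen hA (by simp)

theorem smoothD2 (hL : ContDiffOn ℝ (⊤ : ℕ∞) L A) (hA : IsOpen A) :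
    ContDiffOn ℝ (⊤ : ℕ∞) (fderiv ℝ (fderiv ℝ L)) A :=
  (smoothD1 hL hA).fderiv_of_isOpen hA (by simp)

/-- `q ↦ (fderiv L q) c` has fderiv `h ↦ D2 p h c` at `p ∈ A`. -/
theorem hasFDerivAt_D1_apply (hL : ContDiffOn ℝ (⊤ : ℕ∞) L A) (hA : IsOpen A)
    {p : Vec n × Vec n} (hp : p ∈ A) (c : Vec n × Vec n) :
    HasFDerivAt (fun q => fderiv ℝ L q c)
      ((fderiv ℝ (fderiv ℝ L) p).flip c) p := by
  have h1 := (diffAt' (smoothD1 hL hA) hA hp).hasFDerivAt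
  have h2 := h1.clm_apply (hasFDerivAt_const c p)
  rw [ContinuousLinearMap.comp_zero, zero_add] at h2
  exact h2

/-- `q ↦ (fderiv (fderiv L) q) b c` has fderiv `h ↦ D3 p h b c` at `p ∈ A`. -/
theorem hasFDerivAt_D2_apply (hL : ContDiffOn ℝ (⊤ : ℕ∞) L A) (hA : IsOpen A)
    {p : Vec n × Vec n} (hp : p ∈ A) (b c : Vec n × Vec n) :
    HasFDerivAt (fun q => fderiv ℝ (fderiv ℝ L) q b c)
      (((fderiv ℝ (fderiv ℝ (fderiv ℝ L)) p).flip b).flip c) p := by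
  have h1 := (diffAt' (smoothD2 hL hA) hA hp).hasFDerivAt
  have h2 := (h1.clm_apply (hasFDerivAt_const b p)).clm_apply (hasFDerivAt_const c p)
  rw [ContinuousLinearMap.comp_zero, ContinuousLinearMap.comp_zero, zero_add,
    zero_add] at h2
  exact h2

theorem inner_hasDerivAt (hL : ContDiffOn ℝ (⊤ : ℕ∞) L A) (hA : IsOpen A)
    {x v : Vec n} (hq : (x, v) ∈ A) (w : Vec n) :
    HasDerivAt (fun s : ℝ => L (x, v + s • w)) (fderiv ℝ L (x, v) (0, w)) 0 := by
  have hcurve : HasDerivAt (fun s : ℝ => ((x, v + s • w) : Vec n × Vec n))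
      ((0 : Vec n), w) 0 := by
    have h1 : HasDerivAt (fun s : ℝ => v + s • w) w 0 := by
      simpa using ((hasDerivAt_id (0:ℝ)).smul_const w).const_add v
    exact (hasDerivAt_const (0:ℝ) x).prodMk h1
  have hLd : HasFDerivAt L (fderiv ℝ L (x, v)) (x, v) := (diffAt hL hA hq).hasFDerivAt
  have := hLd.comp_hasDerivAt_of_eq (0:ℝ) hcurve (by simp)
  simpa [Function.comp_def] using this

/-- second-level derivative. -/
theorem middle_hasDerivAt (hL : ContDiffOn ℝ (⊤ : ℕ∞) L A) (hA : IsOpen A)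
    {x v : Vec n} (hq : (x, v) ∈ A) (w₂ w₃ : Vec n) :
    HasDerivAt (fun s₂ : ℝ => deriv (fun s₃ : ℝ => L (x, v + s₂ • w₂ + s₃ • w₃)) 0)
      (fderiv ℝ (fderiv ℝ L) (x, v) (0, w₂) (0, w₃)) 0 := by
  have hcurve : HasDerivAt (fun s₂ : ℝ => ((x, v + s₂ • w₂) : Vec n × Vec n))
      ((0 : Vec n), w₂) 0 := by
    have h1 : HasDerivAt (fun s : ℝ => v + s • w₂) w₂ 0 := by
      simpa using ((hasDerivAt_id (0:ℝ)).smul_const w₂).const_add v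
    exact (hasDerivAt_const (0:ℝ) x).prodMk h1
  have hmain : HasDerivAt (fun s₂ : ℝ => fderiv ℝ L (x, v + s₂ • w₂) (0, w₃))
      (fderiv ℝ (fderiv ℝ L) (x, v) (0, w₂) (0, w₃)) 0 := by
    have := (hasFDerivAt_D1_apply hL hA hq ((0 : Vec n), w₃)).comp_hasDerivAt_of_eq (0:ℝ)
      hcurve (by simp)
    simpa [Function.comp_def] using this
  apply hmain.congr_of_eventuallyEq
  have hc : ContinuousAt (fun s₂ : ℝ => ((x, v + s₂ • w₂) : Vec n × Vec n)) 0 :=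
    hcurve.continuousAt
  have hmem : ∀ᶠ s₂ in 𝓝 (0:ℝ), ((x, v + s₂ • w₂) : Vec n × Vec n) ∈ A := by
    apply hc.eventually_mem
    simpa using hA.mem_nhds hq
  filter_upwards [hmem] with s₂ hs₂
  exact (inner_hasDerivAt hL hA hs₂ w₃).deriv

theorem gF_eq (hL : ContDiffOn ℝ (⊤ : ℕ∞) L A) (hA : IsOpen A)
    {x v : Vec n} (hp : (x, v) ∈ A) (u w : Vec n) :
    gF L x v u w = (1/2) * fderiv ℝ (fderiv ℝ L) (x, v) (0, u) (0, w) := by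
  unfold gF
  congr 1
  have hcurve : HasDerivAt (fun t : ℝ => ((x, v + t • u) : Vec n × Vec n))
      ((0 : Vec n), u) 0 := by
    have h1 : HasDerivAt (fun s : ℝ => v + s • u) u 0 := by
      simpa using ((hasDerivAt_id (0:ℝ)).smul_const u).const_add v
    exact (hasDerivAt_const (0:ℝ) x).prodMk h1
  have hmem : ∀ᶠ t in 𝓝 (0:ℝ), ((x, v + t • u) : Vec n × Vec n) ∈ A := by
    apply hcurve.continuousAt.eventually_mem
    simpa using hA.mem_nhds hp
  have hev : (fun t : ℝ => deriv (fun s : ℝ => L (x, v + t • u + s • w)) 0)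
      =ᶠ[𝓝 (0:ℝ)] fun t : ℝ => fderiv ℝ L (x, v + t • u) (0, w) := by
    filter_upwards [hmem] with t ht
    exact (inner_hasDerivAt hL hA ht w).deriv
  rw [hev.deriv_eq]
  have := (hasFDerivAt_D1_apply hL hA hp ((0 : Vec n), w)).comp_hasDerivAt_of_eq (0:ℝ)
    hcurve (by simp)
  have h2 : HasDerivAt (fun t : ℝ => fderiv ℝ L (x, v + t • u) (0, w))
      (fderiv ℝ (fderiv ℝ L) (x, v) (0, u) (0, w)) 0 := by
    simpa [Function.comp_def] using this
  exact h2.deriv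

theorem CartanF_eq (hL : ContDiffOn ℝ (⊤ : ℕ∞) L A) (hA : IsOpen A)
    {x v : Vec n} (hp : (x, v) ∈ A) (w₁ w₂ w₃ : Vec n) :
    CartanF L x v w₁ w₂ w₃ =
      (1/4) * fderiv ℝ (fderiv ℝ (fderiv ℝ L)) (x, v) (0, w₁) (0, w₂) (0, w₃) := by
  unfold CartanF
  congr 1
  have hcurve : HasDerivAt (fun t : ℝ => ((x, v + t • w₁) : Vec n × Vec n))
      ((0 : Vec n), w₁) 0 := by
    have h1 : HasDerivAt (fun s : ℝ => v + s • w₁) w₁ 0 := by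
      simpa using ((hasDerivAt_id (0:ℝ)).smul_const w₁).const_add v
    exact (hasDerivAt_const (0:ℝ) x).prodMk h1
  have hmem : ∀ᶠ t in 𝓝 (0:ℝ), ((x, v + t • w₁) : Vec n × Vec n) ∈ A := by
    apply hcurve.continuousAt.eventually_mem
    simpa using hA.mem_nhds hp
  have hev : (fun s₁ : ℝ => deriv (fun s₂ : ℝ => deriv (fun s₃ : ℝ =>
        L (x, v + s₁ • w₁ + s₂ • w₂ + s₃ • w₃)) 0) 0)
      =ᶠ[𝓝 (0:ℝ)] fun s₁ : ℝ => fderiv ℝ (fderiv ℝ L) (x, v + s₁ • w₁) (0, w₂) (0, w₃) := by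
    filter_upwards [hmem] with s₁ hs₁
    exact (middle_hasDerivAt hL hA hs₁ w₂ w₃).deriv
  rw [hev.deriv_eq]
  have := (hasFDerivAt_D2_apply hL hA hp ((0 : Vec n), w₂) ((0 : Vec n), w₃)).comp_hasDerivAt_of_eq (0:ℝ)
    hcurve (by simp)
  have h2 : HasDerivAt (fun s₁ : ℝ => fderiv ℝ (fderiv ℝ L) (x, v + s₁ • w₁) (0, w₂) (0, w₃))
      (fderiv ℝ (fderiv ℝ (fderiv ℝ L)) (x, v) (0, w₁) (0, w₂) (0, w₃)) 0 := by
    simpa [Function.comp_def] using this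
  exact h2.deriv


theorem baseDir {n : ℕ} {Ω : Set (Vec n)} {A : Set (Vec n × Vec n)} {L : Vec n × Vec n → ℝ}
    {Γc : Vec n × Vec n → Bil n}
    (hL : IsPseudoFinsler Ω A L) (hΓ : IsChernConnection L A Γc)
    {x v : Vec n} (hp : (x, v) ∈ A) (e u w : Vec n) :
    (1/2) * fderiv ℝ (fderiv ℝ (fderiv ℝ L)) (x, v) (e, 0) (0, u) (0, w) =
      gF L x v (Γc (x, v) e u) w + gF L x v u (Γc (x, v) e w)
        + 2 * CartanF L x v (Γc (x, v) e v) u w := by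
  have hA := hL.isOpen_dom
  have hsm := hL.smooth
  have hU : IsOpen {y : Vec n | (y, v) ∈ A} :=
    hA.preimage (continuous_id.prodMk continuous_const)
  have hxU : x ∈ {y : Vec n | (y, v) ∈ A} := hp
  have hcomp := hΓ.2.2 _ hU (fun _ => v) contDiffOn_const (fun y hy => hy)
  have hkey := hcomp (fun _ => e) (fun _ => u) (fun _ => w)
    contDiffOn_const contDiffOn_const contDiffOn_const x hxU
  simp only [nablaVF, fderiv_const, Pi.zero_apply, ContinuousLinearMap.zero_apply,
    zero_add] at hkey
  have hev : (fun y => gF L y v u w) =ᶠ[𝓝 x]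
      (fun y => (1/2) * fderiv ℝ (fderiv ℝ L) (y, v) (0, u) (0, w)) := by
    filter_upwards [hU.eventually_mem hxU] with y hy
    exact gF_eq hsm hA hy u w
  rw [hev.fderiv_eq] at hkey
  have hincl : HasFDerivAt (fun y : Vec n => ((y, v) : Vec n × Vec n))
      ((ContinuousLinearMap.id ℝ (Vec n)).prod 0) x :=
    (hasFDerivAt_id x).prodMk (hasFDerivAt_const v x)
  have hcompF : HasFDerivAt (fun y : Vec n => fderiv ℝ (fderiv ℝ L) (y, v) (0, u) (0, w))
      ((((fderiv ℝ (fderiv ℝ (fderiv ℝ L)) (x, v)).flip ((0:Vec n), u)).flip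
        ((0:Vec n), w)).comp ((ContinuousLinearMap.id ℝ (Vec n)).prod 0)) x := by
    have := (hasFDerivAt_D2_apply hsm hA hp ((0:Vec n), u) ((0:Vec n), w)).comp x hincl
    simpa [Function.comp_def] using this
  have hfin := hcompF.const_mul (1/2 : ℝ)
  rw [hfin.fderiv] at hkey
  simpa using hkey

end ChernAux


/-- Almost `g`-compatibility of the covariant derivative along a curve:
`d/dt g_W(X,Y) = g_W(D^W_γ X, Y) + g_W(X, D^W_γ Y) + 2 C_W(D^W_γ W, X, Y)`. -/
theorem covDer_almost_compatible {n : ℕ} (hn : 1 ≤ n)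
    (Ω : Set (Vec n)) (A : Set (Vec n × Vec n)) (L : Vec n × Vec n → ℝ)
    (hL : IsPseudoFinsler Ω A L)
    (Γc : Vec n × Vec n → Bil n) (hΓ : IsChernConnection L A Γc)
    (I : Set ℝ) (hIopen : IsOpen I) (hIconn : I.OrdConnected)
    (γ : ℝ → Vec n) (hγ : ContDiffOn ℝ (⊤ : ℕ∞) γ I) (hγΩ : ∀ t ∈ I, γ t ∈ Ω)
    (W : ℝ → Vec n) (hW : ContDiffOn ℝ (⊤ : ℕ∞) W I) (hWadm : ∀ t ∈ I, (γ t, W t) ∈ A)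
    (X Y : ℝ → Vec n) (hX : ContDiffOn ℝ (⊤ : ℕ∞) X I) (hY : ContDiffOn ℝ (⊤ : ℕ∞) Y I) :
    ∀ t ∈ I,
      deriv (fun τ => gF L (γ τ) (W τ) (X τ) (Y τ)) t =
        gF L (γ t) (W t) (covDer Γc γ W X t) (Y t)
          + gF L (γ t) (W t) (X t) (covDer Γc γ W Y t)
          + 2 * CartanF L (γ t) (W t) (covDer Γc γ W W t) (X t) (Y t) := by
  intro t ht
  have hA := hL.isOpen_dom
  have hsm := hL.smooth
  have hp : ((γ t, W t) : Vec n × Vec n) ∈ A := hWadm t ht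
  have hmemI : I ∈ 𝓝 t := hIopen.mem_nhds ht
  have hγd : HasDerivAt γ (deriv γ t) t :=
    ((hγ.differentiableOn (by simp)).differentiableAt hmemI).hasDerivAt
  have hWd : HasDerivAt W (deriv W t) t :=
    ((hW.differentiableOn (by simp)).differentiableAt hmemI).hasDerivAt
  have hXd : HasDerivAt X (deriv X t) t :=
    ((hX.differentiableOn (by simp)).differentiableAt hmemI).hasDerivAt
  have hYd : HasDerivAt Y (deriv Y t) t :=
    ((hY.differentiableOn (by simp)).differentiableAt hmemI).hasDerivAt
  have hφ : HasDerivAt (fun τ => ((γ τ, W τ) : Vec n × Vec n)) (deriv γ t, deriv W t) t :=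
    hγd.prodMk hWd
  have hD2sm : DifferentiableAt ℝ (fderiv ℝ (fderiv ℝ L)) (γ t, W t) :=
    ChernAux.diffAt' (ChernAux.smoothD2 hsm hA) hA hp
  have hB : HasDerivAt (fun τ => fderiv ℝ (fderiv ℝ L) (γ τ, W τ))
      (fderiv ℝ (fderiv ℝ (fderiv ℝ L)) (γ t, W t) (deriv γ t, deriv W t)) t := by
    simpa [Function.comp_def] using HasFDerivAt.comp_hasDerivAt (E := Vec n × Vec n →L[ℝ] Vec n × Vec n →L[ℝ] ℝ)
      (F := Vec n × Vec n) t hD2sm.hasFDerivAt hφ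
  have ha : HasDerivAt (fun τ => (((0 : Vec n), X τ) : Vec n × Vec n)) ((0:Vec n), deriv X t) t :=
    (hasDerivAt_const t (0 : Vec n)).prodMk hXd
  have hb : HasDerivAt (fun τ => (((0 : Vec n), Y τ) : Vec n × Vec n)) ((0:Vec n), deriv Y t) t :=
    (hasDerivAt_const t (0 : Vec n)).prodMk hYd
  have h2 := (hB.clm_apply ha).clm_apply hb
  have h3 := HasDerivAt.const_mul (1/2 : ℝ) h2
  have hev : (fun τ => gF L (γ τ) (W τ) (X τ) (Y τ)) =ᶠ[𝓝 t]
      (fun τ => (1/2) * fderiv ℝ (fderiv ℝ L) (γ τ, W τ) (0, X τ) (0, Y τ)) := by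
    filter_upwards [hφ.continuousAt.eventually_mem (hA.mem_nhds hp)] with τ hτ
    exact ChernAux.gF_eq hsm hA hτ (X τ) (Y τ)
  rw [hev.deriv_eq, h3.deriv]
  simp only [covDer]
  rw [ChernAux.gF_eq hsm hA hp, ChernAux.gF_eq hsm hA hp, ChernAux.CartanF_eq hsm hA hp]
  have hBD := ChernAux.baseDir hL hΓ hp (deriv γ t) (X t) (Y t)
  rw [ChernAux.gF_eq hsm hA hp, ChernAux.gF_eq hsm hA hp, ChernAux.CartanF_eq hsm hA hp] at hBD
  have hsplit : ((deriv γ t, deriv W t) : Vec n × Vec n)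
      = (deriv γ t, 0) + (0, deriv W t) := by
    simp [Prod.ext_iff]
  have hpair : ∀ a b : Vec n, (((0:Vec n), a + b) : Vec n × Vec n)
      = ((0:Vec n), a) + ((0:Vec n), b) := by
    intro a b; simp [Prod.ext_iff]
  rw [hsplit, hpair, hpair, hpair]
  simp only [map_add, ContinuousLinearMap.add_apply]
  linear_combination hBD
end
end

section
/- Let L be a pseudo-Finsler metric on a conic domain A over Ω ⊆ ℝⁿ, let V be an L-admissible smooth vector field on Ω, let Γ be a torsion-free connection datum almost g-compatible with reference V, with connection ∇ and curvature tensor R^V. Then for all smooth vector fields X, Y, Z, W on Ω and all x ∈ Ω: g_V(R^V(X,Y)Z, W) + g_V(R^V(X,Y)W, Z) = 2 B^V(X,Y,Z,W), where g_V(·,·)(x) := g_{(x,V(x))}(·,·). -/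
noncomputable section

open scoped Topology

section Helpers

variable {E F G : Type*} [NormedAddCommGroup E] [NormedSpace ℝ E]
  [NormedAddCommGroup F] [NormedSpace ℝ F] [NormedAddCommGroup G] [NormedSpace ℝ G]

theorem hasDerivAt_line (f : E → F) (p k : E) (t₀ : ℝ)
    (hf : DifferentiableAt ℝ f (p + t₀ • k)) :
    HasDerivAt (fun t : ℝ => f (p + t • k)) (fderiv ℝ f (p + t₀ • k) k) t₀ := by
  have h1 : HasDerivAt (fun t : ℝ => p + t • k) k t₀ := by
    simpa using ((hasDerivAt_id t₀).smul_const k).const_add p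
  exact hf.hasFDerivAt.comp_hasDerivAt t₀ h1

theorem deriv_line (f : E → F) (p k : E) (hf : DifferentiableAt ℝ f p) :
    deriv (fun t : ℝ => f (p + t • k)) 0 = fderiv ℝ f p k := by
  have := hasDerivAt_line f p k 0 (by simpa using hf)
  simpa using this.deriv

theorem hasFDerivAt_apply_const {c : E → (F →L[ℝ] G)} {p : E}
    (hc : DifferentiableAt ℝ c p) (z : F) :
    HasFDerivAt (fun y => c y z) ((fderiv ℝ c p).flip z) p := by
  simpa using hc.hasFDerivAt.clm_apply (hasFDerivAt_const z p)

theorem diffAt_apply_const {c : E → (F →L[ℝ] G)} {p : E}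
    (hc : DifferentiableAt ℝ c p) (z : F) :
    DifferentiableAt ℝ (fun y => c y z) p :=
  (hasFDerivAt_apply_const hc z).differentiableAt

theorem fderiv_apply_const {c : E → (F →L[ℝ] G)} {p : E}
    (hc : DifferentiableAt ℝ c p) (z : F) (k : E) :
    fderiv ℝ (fun y => c y z) p k = fderiv ℝ c p k z := by
  rw [(hasFDerivAt_apply_const hc z).fderiv]; rfl

theorem hasFDerivAt_apply_const₂ {H : Type*} [NormedAddCommGroup H] [NormedSpace ℝ H]
    {c : E → (F →L[ℝ] G →L[ℝ] H)} {p : E}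
    (hc : DifferentiableAt ℝ c p) (z : F) (z' : G) :
    HasFDerivAt (fun y => c y z z') (((fderiv ℝ c p).flip z).flip z') p := by
  have h1 := hasFDerivAt_apply_const hc z
  have := hasFDerivAt_apply_const (c := fun y => c y z) (p := p) h1.differentiableAt z'
  rwa [h1.fderiv] at this

theorem fderiv_apply_const₂ {H : Type*} [NormedAddCommGroup H] [NormedSpace ℝ H]
    {c : E → (F →L[ℝ] G →L[ℝ] H)} {p : E}
    (hc : DifferentiableAt ℝ c p) (z : F) (z' : G) (k : E) :
    fderiv ℝ (fun y => c y z z') p k = fderiv ℝ c p k z z' := by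
  rw [(hasFDerivAt_apply_const₂ hc z z').fderiv]; rfl

end Helpers

noncomputable instance instNACG3 (n : ℕ) :
    NormedAddCommGroup (Vec n × Vec n →L[ℝ] Vec n × Vec n →L[ℝ] Vec n × Vec n →L[ℝ] ℝ) := by
  letI : NormedAddCommGroup (Vec n × Vec n →L[ℝ] Vec n × Vec n →L[ℝ] ℝ) := inferInstance
  letI : NormedSpace ℝ (Vec n × Vec n →L[ℝ] Vec n × Vec n →L[ℝ] ℝ) := inferInstance
  infer_instance

noncomputable instance instNS3 (n : ℕ) :
    NormedSpace ℝ (Vec n × Vec n →L[ℝ] Vec n × Vec n →L[ℝ] Vec n × Vec n →L[ℝ] ℝ) := by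
  letI : NormedAddCommGroup (Vec n × Vec n →L[ℝ] Vec n × Vec n →L[ℝ] ℝ) := inferInstance
  letI : NormedSpace ℝ (Vec n × Vec n →L[ℝ] Vec n × Vec n →L[ℝ] ℝ) := inferInstance
  infer_instance

section PF

variable {n : ℕ} {Ω : Set (Vec n)} {A : Set (Vec n × Vec n)} {L : Vec n × Vec n → ℝ}

/-- second full derivative of L -/
abbrev l2 (L : Vec n × Vec n → ℝ) : (Vec n × Vec n) → (Vec n × Vec n) →L[ℝ] (Vec n × Vec n) →L[ℝ] ℝ :=
  fderiv ℝ (fderiv ℝ L)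

/-- third full derivative of L -/
abbrev l3 (L : Vec n × Vec n → ℝ) := fderiv ℝ (l2 L)

theorem IsPseudoFinsler.l1_smooth (hL : IsPseudoFinsler Ω A L) :
    ContDiffOn ℝ (⊤ : ℕ∞) (fderiv ℝ L) A :=
  hL.smooth.fderiv_of_isOpen hL.isOpen_dom (by simp)

theorem IsPseudoFinsler.l2_smooth (hL : IsPseudoFinsler Ω A L) :
    ContDiffOn ℝ (⊤ : ℕ∞) (l2 L) A :=
  hL.l1_smooth.fderiv_of_isOpen hL.isOpen_dom (by simp)

theorem IsPseudoFinsler.l3_smooth (hL : IsPseudoFinsler Ω A L) :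
    ContDiffOn ℝ (⊤ : ℕ∞) (l3 L) A :=
  hL.l2_smooth.fderiv_of_isOpen hL.isOpen_dom (by simp)

theorem IsPseudoFinsler.diffAt (hL : IsPseudoFinsler Ω A L) {p : Vec n × Vec n} (hp : p ∈ A) :
    DifferentiableAt ℝ L p :=
  ((hL.smooth p hp).contDiffAt (hL.isOpen_dom.mem_nhds hp)).differentiableAt (by simp)

theorem IsPseudoFinsler.l1_diffAt (hL : IsPseudoFinsler Ω A L) {p : Vec n × Vec n} (hp : p ∈ A) :
    DifferentiableAt ℝ (fderiv ℝ L) p :=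
  ((hL.l1_smooth p hp).contDiffAt (hL.isOpen_dom.mem_nhds hp)).differentiableAt (by simp)

theorem IsPseudoFinsler.l2_diffAt (hL : IsPseudoFinsler Ω A L) {p : Vec n × Vec n} (hp : p ∈ A) :
    DifferentiableAt ℝ (l2 L) p :=
  ((hL.l2_smooth p hp).contDiffAt (hL.isOpen_dom.mem_nhds hp)).differentiableAt (by simp)

/-- inner derivative step -/
theorem IsPseudoFinsler.deriv_inner (hL : IsPseudoFinsler Ω A L)
    {q : Vec n × Vec n} (hq : q ∈ A) (w : Vec n) :
    deriv (fun s : ℝ => L (q.1, q.2 + s • w)) 0 = fderiv ℝ L q (0, w) := by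
  have hfun : (fun s : ℝ => L (q.1, q.2 + s • w)) = fun s : ℝ => L (q + s • ((0 : Vec n), w)) := by
    funext s
    congr 1
    ext <;> simp
  rw [hfun]
  exact deriv_line L q ((0 : Vec n), w) (hL.diffAt hq)

/-- `gF` as second derivative. -/
theorem IsPseudoFinsler.gF_eq (hL : IsPseudoFinsler Ω A L)
    {x v : Vec n} (hp : (x, v) ∈ A) (u w : Vec n) :
    gF L x v u w = (1 / 2) * l2 L (x, v) (0, u) (0, w) := by
  have hev : (fun t : ℝ => deriv (fun s : ℝ => L (x, v + t • u + s • w)) 0)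
      =ᶠ[nhds (0 : ℝ)] fun t : ℝ => fderiv ℝ L (x, v + t • u) (0, w) := by
    have hc : Continuous fun t : ℝ => ((x, v + t • u) : Vec n × Vec n) := by fun_prop
    have h0 : (fun t : ℝ => ((x, v + t • u) : Vec n × Vec n)) ⁻¹' A ∈ nhds (0 : ℝ) := by
      apply hc.continuousAt.preimage_mem_nhds
      simpa using hL.isOpen_dom.mem_nhds hp
    filter_upwards [h0] with t ht
    exact hL.deriv_inner ht w
  unfold gF
  rw [hev.deriv_eq]
  have hfun : (fun t : ℝ => fderiv ℝ L (x, v + t • u) (0, w))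
      = fun t : ℝ => (fun q => fderiv ℝ L q ((0 : Vec n), w)) ((x, v) + t • ((0 : Vec n), u)) := by
    funext t
    congr 2
    ext <;> simp
  rw [hfun, deriv_line _ _ _ (diffAt_apply_const (hL.l1_diffAt hp) _),
    fderiv_apply_const (hL.l1_diffAt hp)]

end PF
section PF2

variable {n : ℕ} {Ω : Set (Vec n)} {A : Set (Vec n × Vec n)} {L : Vec n × Vec n → ℝ}

/-- middle derivative step -/
theorem IsPseudoFinsler.deriv_mid (hL : IsPseudoFinsler Ω A L)
    {q : Vec n × Vec n} (hq : q ∈ A) (b c : Vec n) :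
    deriv (fun s₂ : ℝ => deriv (fun s₃ : ℝ => L (q.1, q.2 + s₂ • b + s₃ • c)) 0) 0
      = l2 L q (0, b) (0, c) := by
  have hev : (fun s₂ : ℝ => deriv (fun s₃ : ℝ => L (q.1, q.2 + s₂ • b + s₃ • c)) 0)
      =ᶠ[nhds (0 : ℝ)] fun s₂ : ℝ => fderiv ℝ L (q.1, q.2 + s₂ • b) (0, c) := by
    have hc : Continuous fun s₂ : ℝ => ((q.1, q.2 + s₂ • b) : Vec n × Vec n) := by fun_prop
    have h0 : (fun s₂ : ℝ => ((q.1, q.2 + s₂ • b) : Vec n × Vec n)) ⁻¹' A ∈ nhds (0 : ℝ) := by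
      apply hc.continuousAt.preimage_mem_nhds
      simpa using hL.isOpen_dom.mem_nhds hq
    filter_upwards [h0] with s₂ hs₂
    exact hL.deriv_inner hs₂ c
  rw [hev.deriv_eq]
  have hfun : (fun s₂ : ℝ => fderiv ℝ L (q.1, q.2 + s₂ • b) (0, c))
      = fun s₂ : ℝ => (fun p => fderiv ℝ L p ((0 : Vec n), c)) (q + s₂ • ((0 : Vec n), b)) := by
    funext s₂
    congr 2
    ext <;> simp
  rw [hfun, deriv_line _ _ _ (diffAt_apply_const (hL.l1_diffAt hq) _),
    fderiv_apply_const (hL.l1_diffAt hq)]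

/-- `CartanF` as third derivative. -/
theorem IsPseudoFinsler.CartanF_eq (hL : IsPseudoFinsler Ω A L)
    {x v : Vec n} (hp : (x, v) ∈ A) (a b c : Vec n) :
    CartanF L x v a b c = (1 / 4) * l3 L (x, v) (0, a) (0, b) (0, c) := by
  have hev : (fun s₁ : ℝ => deriv (fun s₂ : ℝ => deriv (fun s₃ : ℝ =>
        L (x, v + s₁ • a + s₂ • b + s₃ • c)) 0) 0)
      =ᶠ[nhds (0 : ℝ)] fun s₁ : ℝ => l2 L (x, v + s₁ • a) (0, b) (0, c) := by
    have hc : Continuous fun s₁ : ℝ => ((x, v + s₁ • a) : Vec n × Vec n) := by fun_prop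
    have h0 : (fun s₁ : ℝ => ((x, v + s₁ • a) : Vec n × Vec n)) ⁻¹' A ∈ nhds (0 : ℝ) := by
      apply hc.continuousAt.preimage_mem_nhds
      simpa using hL.isOpen_dom.mem_nhds hp
    filter_upwards [h0] with s₁ hs₁
    have := hL.deriv_mid hs₁ b c
    simpa [add_assoc] using this
  unfold CartanF
  rw [hev.deriv_eq]
  have hfun : (fun s₁ : ℝ => l2 L (x, v + s₁ • a) (0, b) (0, c))
      = fun s₁ : ℝ => (fun p => l2 L p ((0 : Vec n), b) ((0 : Vec n), c))
        ((x, v) + s₁ • ((0 : Vec n), a)) := by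
    funext s₁
    congr 2
    ext <;> simp
  rw [hfun, deriv_line _ _ _ (hasFDerivAt_apply_const₂ (hL.l2_diffAt hp) _ _).differentiableAt,
    fderiv_apply_const₂ (hL.l2_diffAt hp)]

theorem IsPseudoFinsler.l2_symm (hL : IsPseudoFinsler Ω A L)
    {p : Vec n × Vec n} (hp : p ∈ A) (a b : Vec n × Vec n) :
    l2 L p a b = l2 L p b a :=
  (((hL.smooth p hp).contDiffAt (hL.isOpen_dom.mem_nhds hp)).isSymmSndFDerivAt (by rw [minSmoothness_of_isRCLikeNormedField]; exact WithTop.coe_le_coe.mpr le_top)) a b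

theorem IsPseudoFinsler.l3_symm23 (hL : IsPseudoFinsler Ω A L)
    {p : Vec n × Vec n} (hp : p ∈ A) (q r s : Vec n × Vec n) :
    l3 L p q r s = l3 L p q s r := by
  have h1 : HasFDerivAt (fun y => l2 L y r s - l2 L y s r)
      ((((l3 L p).flip r).flip s) - (((l3 L p).flip s).flip r)) p :=
    (hasFDerivAt_apply_const₂ (hL.l2_diffAt hp) r s).sub
      (hasFDerivAt_apply_const₂ (hL.l2_diffAt hp) s r)
  have hev : (fun y => l2 L y r s - l2 L y s r) =ᶠ[nhds p] fun _ => (0 : ℝ) := by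
    filter_upwards [hL.isOpen_dom.mem_nhds hp] with y hy
    simp [hL.l2_symm hy r s]
  have h2 : HasFDerivAt (fun y => l2 L y r s - l2 L y s r) 0 p :=
    (hasFDerivAt_const (𝕜 := ℝ) (0 : ℝ) p).congr_of_eventuallyEq hev
  have := h1.unique h2
  have := congrFun (congrArg DFunLike.coe this) q
  simpa [sub_eq_zero] using this

theorem IsPseudoFinsler.l3_symm12 (hL : IsPseudoFinsler Ω A L)
    {p : Vec n × Vec n} (hp : p ∈ A) (q r s : Vec n × Vec n) :
    l3 L p q r s = l3 L p r q s := by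
  classical
  set h_s : Vec n × Vec n → ℝ := fun y => fderiv ℝ L y s with hh
  have hsm : ContDiffOn ℝ (⊤ : ℕ∞) h_s A := hL.l1_smooth.clm_apply contDiffOn_const
  have hd1 : DifferentiableAt ℝ (fderiv ℝ h_s) p :=
    (((hsm.fderiv_of_isOpen hL.isOpen_dom (m := 1) (WithTop.coe_le_coe.mpr le_top)) p hp).contDiffAt
      (hL.isOpen_dom.mem_nhds hp)).differentiableAt (by simp : (1 : WithTop ℕ∞) ≠ 0)
  have key : ∀ q' r' : Vec n × Vec n, fderiv ℝ (fderiv ℝ h_s) p q' r' = l3 L p q' r' s := by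
    intro q' r'
    have hev : (fun y => fderiv ℝ h_s y r') =ᶠ[nhds p] fun y => l2 L y r' s := by
      filter_upwards [hL.isOpen_dom.mem_nhds hp] with y hy
      have : fderiv ℝ h_s y = (l2 L y).flip s :=
        (hasFDerivAt_apply_const (hL.l1_diffAt hy) s).fderiv
      rw [this]; rfl
    have h1 : fderiv ℝ (fun y => fderiv ℝ h_s y r') p q' = fderiv ℝ (fderiv ℝ h_s) p q' r' :=
      fderiv_apply_const hd1 r' q'
    have h2 : fderiv ℝ (fun y => l2 L y r' s) p q' = l3 L p q' r' s :=
      fderiv_apply_const₂ (hL.l2_diffAt hp) r' s q'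
    rw [← h1, hev.fderiv_eq, h2]
  have hsymm : fderiv ℝ (fderiv ℝ h_s) p q r = fderiv ℝ (fderiv ℝ h_s) p r q :=
    ((hsm p hp).contDiffAt (hL.isOpen_dom.mem_nhds hp)).isSymmSndFDerivAt (by rw [minSmoothness_of_isRCLikeNormedField]; exact WithTop.coe_le_coe.mpr le_top) q r
  rw [← key q r, ← key r q, hsymm]

end PF2
section PF3

variable {n : ℕ} {Ω : Set (Vec n)} {A : Set (Vec n × Vec n)} {L : Vec n × Vec n → ℝ}

/-- scaling of the second fiber variable as a continuous linear map -/
def scaleSnd (n : ℕ) (t : ℝ) : (Vec n × Vec n) →L[ℝ] (Vec n × Vec n) :=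
  (ContinuousLinearMap.id ℝ (Vec n)).prodMap (t • ContinuousLinearMap.id ℝ (Vec n))

@[simp] theorem scaleSnd_apply (t : ℝ) (y : Vec n × Vec n) :
    scaleSnd n t y = (y.1, t • y.2) := rfl

theorem IsPseudoFinsler.scale_L1 (hL : IsPseudoFinsler Ω A L) {t : ℝ} (ht : 0 < t)
    {y : Vec n × Vec n} (hy : y ∈ A) (b : Vec n) :
    fderiv ℝ L (y.1, t • y.2) (0, b) = t * fderiv ℝ L y (0, b) := by
  have hSty : (y.1, t • y.2) ∈ A := hL.conic y hy t ht
  have h1 : HasFDerivAt (fun y' => L (scaleSnd n t y'))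
      ((fderiv ℝ L (y.1, t • y.2)).comp (scaleSnd n t)) y := by
    have := (hL.diffAt hSty).hasFDerivAt.comp y (scaleSnd n t).hasFDerivAt
    simpa [Function.comp_def] using this
  have h2 : HasFDerivAt (fun y' => t ^ 2 * L y') (t ^ 2 • fderiv ℝ L y) y :=
    (hL.diffAt hy).hasFDerivAt.const_mul (t ^ 2)
  have hev : (fun y' => t ^ 2 * L y') =ᶠ[nhds y] fun y' => L (scaleSnd n t y') := by
    filter_upwards [hL.isOpen_dom.mem_nhds hy] with y' hy'
    simpa using (hL.homogeneous y' hy' t ht).symm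
  have h1' : HasFDerivAt (fun y' => L (scaleSnd n t y')) (t ^ 2 • fderiv ℝ L y) y :=
    h2.congr_of_eventuallyEq hev.symm
  have huniq := h1.unique h1'
  have := congrFun (congrArg DFunLike.coe huniq) ((0 : Vec n), b)
  have hsmul : ((0 : Vec n), t • b) = t • ((0 : Vec n), b) := by ext <;> simp
  simp only [ContinuousLinearMap.coe_comp', Function.comp_apply, scaleSnd_apply,
    ContinuousLinearMap.smul_apply, smul_eq_mul] at this
  rw [hsmul, map_smul] at this
  simp only [smul_eq_mul] at this
  apply mul_left_cancel₀ (ne_of_gt ht)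
  rw [this]; ring

theorem IsPseudoFinsler.scale_L2 (hL : IsPseudoFinsler Ω A L) {t : ℝ} (ht : 0 < t)
    {p : Vec n × Vec n} (hp : p ∈ A) (a b : Vec n) :
    l2 L (p.1, t • p.2) (0, a) (0, b) = l2 L p (0, a) (0, b) := by
  have hStp : (p.1, t • p.2) ∈ A := hL.conic p hp t ht
  have h1 : HasFDerivAt (fun y => (fun q => fderiv ℝ L q ((0 : Vec n), b)) (scaleSnd n t y))
      (((l2 L (p.1, t • p.2)).flip ((0 : Vec n), b)).comp (scaleSnd n t)) p := by
    have := (hasFDerivAt_apply_const (hL.l1_diffAt hStp) ((0 : Vec n), b)).comp p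
      (scaleSnd n t).hasFDerivAt
    simpa [Function.comp_def] using this
  have h2 : HasFDerivAt (fun y => t * fderiv ℝ L y ((0 : Vec n), b))
      (t • ((l2 L p).flip ((0 : Vec n), b))) p :=
    (hasFDerivAt_apply_const (hL.l1_diffAt hp) ((0 : Vec n), b)).const_mul t
  have hev : (fun y => t * fderiv ℝ L y ((0 : Vec n), b))
      =ᶠ[nhds p] fun y => (fun q => fderiv ℝ L q ((0 : Vec n), b)) (scaleSnd n t y) := by
    filter_upwards [hL.isOpen_dom.mem_nhds hp] with y hy
    simpa using (hL.scale_L1 ht hy b).symm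
  have h1' := h2.congr_of_eventuallyEq hev.symm
  have huniq := h1.unique h1'
  have := congrFun (congrArg DFunLike.coe huniq) ((0 : Vec n), a)
  have hsmul : ((0 : Vec n), t • a) = t • ((0 : Vec n), a) := by ext <;> simp
  simp only [ContinuousLinearMap.coe_comp', Function.comp_apply, scaleSnd_apply,
    ContinuousLinearMap.smul_apply, ContinuousLinearMap.flip_apply, smul_eq_mul] at this
  rw [show ((0:Vec n), t • a) = t • ((0:Vec n), a) from hsmul, map_smul] at this
  simp only [ContinuousLinearMap.smul_apply, smul_eq_mul] at this
  exact mul_left_cancel₀ (ne_of_gt ht) this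

theorem IsPseudoFinsler.euler3 (hL : IsPseudoFinsler Ω A L)
    {x v : Vec n} (hp : (x, v) ∈ A) (a b : Vec n) :
    l3 L (x, v) (0, v) (0, a) (0, b) = 0 := by
  have hrw : ((x, (0 : Vec n)) : Vec n × Vec n) + (1 : ℝ) • ((0 : Vec n), v) = (x, v) := by
    ext <;> simp
  have hdiff : DifferentiableAt ℝ (fun q => l2 L q ((0 : Vec n), a) ((0 : Vec n), b)) (x, v) :=
    (hasFDerivAt_apply_const₂ (hL.l2_diffAt hp) _ _).differentiableAt
  have hd := hasDerivAt_line (fun q => l2 L q ((0 : Vec n), a) ((0 : Vec n), b))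
      (x, (0 : Vec n)) ((0 : Vec n), v) 1 (by rw [hrw]; exact hdiff)
  rw [hrw] at hd
  have hval : fderiv ℝ (fun q => l2 L q ((0 : Vec n), a) ((0 : Vec n), b)) (x, v) (0, v)
      = l3 L (x, v) (0, v) (0, a) (0, b) := fderiv_apply_const₂ (hL.l2_diffAt hp) _ _ _
  have hev : (fun s : ℝ => (fun q => l2 L q ((0 : Vec n), a) ((0 : Vec n), b))
        ((x, (0 : Vec n)) + s • ((0 : Vec n), v)))
      =ᶠ[nhds (1 : ℝ)] fun _ => l2 L (x, v) (0, a) (0, b) := by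
    filter_upwards [eventually_gt_nhds (show (0:ℝ) < 1 by norm_num)] with s hs
    have harg : ((x, (0 : Vec n)) : Vec n × Vec n) + s • ((0 : Vec n), v) = (x, s • v) := by
      ext <;> simp
    rw [harg]
    exact hL.scale_L2 hs hp a b
  have h0 : deriv (fun s : ℝ => (fun q => l2 L q ((0 : Vec n), a) ((0 : Vec n), b))
      ((x, (0 : Vec n)) + s • ((0 : Vec n), v))) 1 = 0 := by
    rw [hev.deriv_eq]; simp
  rw [← hval, ← hd.deriv, h0]

end PF3
section PF4

variable {n : ℕ} {Ω : Set (Vec n)} {A : Set (Vec n × Vec n)} {L : Vec n × Vec n → ℝ}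
  {V : Vec n → Vec n} {Γ : Vec n → Bil n}

/-- the fundamental tensor with reference `V`, via second derivative -/
def g2 (L : Vec n × Vec n → ℝ) (V : Vec n → Vec n) (x a b : Vec n) : ℝ :=
  (1 / 2) * l2 L (x, V x) (0, a) (0, b)

/-- the Cartan tensor with reference `V`, via third derivative -/
def C3 (L : Vec n × Vec n → ℝ) (V : Vec n → Vec n) (x a b c : Vec n) : ℝ :=
  (1 / 4) * l3 L (x, V x) (0, a) (0, b) (0, c)

/-- `∇_d V` for a vector `d` -/
def NN (V : Vec n → Vec n) (Γ : Vec n → Bil n) (x d : Vec n) : Vec n :=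
  fderiv ℝ V x d + Γ x d (V x)

/-- the base-derivative part of the derivative of `g` -/
def Dg (L : Vec n × Vec n → ℝ) (V : Vec n → Vec n) (x d w z : Vec n) : ℝ :=
  (1 / 2) * l3 L (x, V x) (d, fderiv ℝ V x d) (0, w) (0, z)

theorem gF_V (hL : IsPseudoFinsler Ω A L) (hV : LAdmissible A Ω V) {x : Vec n} (hx : x ∈ Ω)
    (a b : Vec n) : gF L x (V x) a b = g2 L V x a b := hL.gF_eq (hV.2 x hx) a b

theorem CartanF_V (hL : IsPseudoFinsler Ω A L) (hV : LAdmissible A Ω V) {x : Vec n} (hx : x ∈ Ω)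
    (a b c : Vec n) : CartanF L x (V x) a b c = C3 L V x a b c := hL.CartanF_eq (hV.2 x hx) a b c

theorem pair0_add (a b : Vec n) :
    ((0 : Vec n), a) + ((0 : Vec n), b) = (((0 : Vec n), a + b) : Vec n × Vec n) := by
  ext <;> simp

theorem pair0_smul (t : ℝ) (a : Vec n) :
    t • (((0 : Vec n), a) : Vec n × Vec n) = ((0 : Vec n), t • a) := by
  ext <;> simp

-- linearity of g2 and C3
theorem g2_addl (x a a' b : Vec n) :
    g2 L V x (a + a') b = g2 L V x a b + g2 L V x a' b := by
  simp only [g2, ← pair0_add, map_add, ContinuousLinearMap.add_apply]; ring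

theorem g2_smull (x : Vec n) (t : ℝ) (a b : Vec n) :
    g2 L V x (t • a) b = t * g2 L V x a b := by
  simp only [g2, ← pair0_smul, map_smul, ContinuousLinearMap.smul_apply, smul_eq_mul]; ring

theorem g2_addr (x a b b' : Vec n) :
    g2 L V x a (b + b') = g2 L V x a b + g2 L V x a b' := by
  simp only [g2, ← pair0_add, map_add, ContinuousLinearMap.add_apply]; ring

theorem g2_smulr (x : Vec n) (t : ℝ) (a b : Vec n) :
    g2 L V x a (t • b) = t * g2 L V x a b := by
  simp only [g2, ← pair0_smul, map_smul, smul_eq_mul]; ring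

theorem C3_addl (x a a' b c : Vec n) :
    C3 L V x (a + a') b c = C3 L V x a b c + C3 L V x a' b c := by
  simp only [C3, ← pair0_add, map_add, ContinuousLinearMap.add_apply]; ring

theorem C3_subl (x a a' b c : Vec n) :
    C3 L V x (a - a') b c = C3 L V x a b c - C3 L V x a' b c := by
  have h : a = (a - a') + a' := by abel
  rw [h, C3_addl]; ring_nf

theorem C3_negl (x a b c : Vec n) : C3 L V x (-a) b c = - C3 L V x a b c := by
  have := C3_subl (L := L) (V := V) x 0 a b c
  have h0 : C3 L V x 0 b c = 0 := by
    have := C3_addl (L := L) (V := V) x 0 0 b c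
    simp at this
    linarith [this]
  simp only [zero_sub] at this
  rw [this, h0]; ring

theorem g2_symm (hL : IsPseudoFinsler Ω A L) (hV : LAdmissible A Ω V) {x : Vec n} (hx : x ∈ Ω)
    (a b : Vec n) : g2 L V x a b = g2 L V x b a := by
  unfold g2; rw [hL.l2_symm (hV.2 x hx)]

theorem C3_euler2 (hL : IsPseudoFinsler Ω A L) (hV : LAdmissible A Ω V) {x : Vec n} (hx : x ∈ Ω)
    (a b : Vec n) : C3 L V x a (V x) b = 0 := by
  unfold C3; rw [hL.l3_symm12 (hV.2 x hx), hL.euler3 (hV.2 x hx)]; ring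

theorem C3_euler3 (hL : IsPseudoFinsler Ω A L) (hV : LAdmissible A Ω V) {x : Vec n} (hx : x ∈ Ω)
    (a b : Vec n) : C3 L V x a b (V x) = 0 := by
  unfold C3
  rw [hL.l3_symm23 (hV.2 x hx), hL.l3_symm12 (hV.2 x hx), hL.euler3 (hV.2 x hx)]; ring

end PF4
section PF5

variable {n : ℕ} {Ω : Set (Vec n)} {A : Set (Vec n × Vec n)} {L : Vec n × Vec n → ℝ}
  {V : Vec n → Vec n} {Γ : Vec n → Bil n}

theorem g2_zerol (x b : Vec n) : g2 L V x 0 b = 0 := by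
  simpa using g2_smull (L := L) (V := V) x 0 0 b

theorem g2_zeror (x a : Vec n) : g2 L V x a 0 = 0 := by
  simpa using g2_smulr (L := L) (V := V) x 0 a 0

theorem V_diffAt (hL : IsPseudoFinsler Ω A L) (hV : LAdmissible A Ω V) {x : Vec n} (hx : x ∈ Ω) :
    DifferentiableAt ℝ V x :=
  ((hV.1 x hx).contDiffAt (hL.isOpen_base.mem_nhds hx)).differentiableAt (by simp)

theorem phi3_diffAt (hL : IsPseudoFinsler Ω A L) (hV : LAdmissible A Ω V) {x : Vec n}
    (hx : x ∈ Ω) : DifferentiableAt ℝ (fun y => l3 L (y, V y)) x := by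
  have h3 : DifferentiableAt ℝ (l3 L) (x, V x) :=
    ((hL.l3_smooth (x, V x) (hV.2 x hx)).contDiffAt
      (hL.isOpen_dom.mem_nhds (hV.2 x hx))).differentiableAt (by simp)
  exact h3.comp x (differentiableAt_fun_id.prodMk (V_diffAt hL hV hx))

/-- derivative of the two-argument `g2` composite -/
theorem g2_comp_hasFDerivAt (hL : IsPseudoFinsler Ω A L) (hV : LAdmissible A Ω V) {x : Vec n}
    (hx : x ∈ Ω) {U W : Vec n → Vec n} (hU : DifferentiableAt ℝ U x)
    (hW : DifferentiableAt ℝ W x) :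
    ∃ D : Vec n →L[ℝ] ℝ, HasFDerivAt (fun y => g2 L V y (U y) (W y)) D x ∧
      ∀ d, D d = Dg L V x d (U x) (W x) + g2 L V x (fderiv ℝ U x d) (W x)
        + g2 L V x (U x) (fderiv ℝ W x d) := by
  have hVd := V_diffAt hL hV hx
  have hι : HasFDerivAt (fun y => ((y, V y) : Vec n × Vec n))
      ((ContinuousLinearMap.id ℝ (Vec n)).prod (fderiv ℝ V x)) x :=
    HasFDerivAt.prodMk (hasFDerivAt_id x) hVd.hasFDerivAt
  have hΦ : HasFDerivAt (fun y => l2 L (y, V y))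
      ((l3 L (x, V x)).comp ((ContinuousLinearMap.id ℝ (Vec n)).prod (fderiv ℝ V x))) x :=
    (hL.l2_diffAt (hV.2 x hx)).hasFDerivAt.comp (g := l2 L) x hι
  have hζU : HasFDerivAt (fun y => (((0 : Vec n), U y) : Vec n × Vec n))
      ((0 : Vec n →L[ℝ] Vec n).prod (fderiv ℝ U x)) x :=
    HasFDerivAt.prodMk (hasFDerivAt_const _ _) hU.hasFDerivAt
  have hζW : HasFDerivAt (fun y => (((0 : Vec n), W y) : Vec n × Vec n))
      ((0 : Vec n →L[ℝ] Vec n).prod (fderiv ℝ W x)) x :=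
    HasFDerivAt.prodMk (hasFDerivAt_const _ _) hW.hasFDerivAt
  have h1 := hΦ.clm_apply hζU
  have h2 := h1.clm_apply hζW
  have h3 := h2.const_mul (1 / 2 : ℝ)
  refine ⟨_, h3, fun d => ?_⟩
  simp only [ContinuousLinearMap.smul_apply, ContinuousLinearMap.add_apply,
    ContinuousLinearMap.coe_comp', Function.comp_apply, ContinuousLinearMap.flip_apply,
    ContinuousLinearMap.prod_apply, ContinuousLinearMap.coe_id', id_eq,
    ContinuousLinearMap.zero_apply, smul_eq_mul]
  unfold Dg g2
  ring

theorem g2_comp_diffAt (hL : IsPseudoFinsler Ω A L) (hV : LAdmissible A Ω V) {x : Vec n}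
    (hx : x ∈ Ω) {U W : Vec n → Vec n} (hU : DifferentiableAt ℝ U x)
    (hW : DifferentiableAt ℝ W x) :
    DifferentiableAt ℝ (fun y => g2 L V y (U y) (W y)) x := by
  obtain ⟨D, hD, -⟩ := g2_comp_hasFDerivAt hL hV hx hU hW
  exact hD.differentiableAt

theorem g2_comp_fderiv (hL : IsPseudoFinsler Ω A L) (hV : LAdmissible A Ω V) {x : Vec n}
    (hx : x ∈ Ω) {U W : Vec n → Vec n} (hU : DifferentiableAt ℝ U x)
    (hW : DifferentiableAt ℝ W x) (d : Vec n) :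
    fderiv ℝ (fun y => g2 L V y (U y) (W y)) x d
      = Dg L V x d (U x) (W x) + g2 L V x (fderiv ℝ U x d) (W x)
        + g2 L V x (U x) (fderiv ℝ W x d) := by
  obtain ⟨D, hD, hDval⟩ := g2_comp_hasFDerivAt hL hV hx hU hW
  rw [hD.fderiv]
  exact hDval d

theorem C3_comp_diffAt (hL : IsPseudoFinsler Ω A L) (hV : LAdmissible A Ω V) {x : Vec n}
    (hx : x ∈ Ω) {F Z W : Vec n → Vec n} (hF : DifferentiableAt ℝ F x)
    (hZ : DifferentiableAt ℝ Z x) (hW : DifferentiableAt ℝ W x) :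
    DifferentiableAt ℝ (fun y => C3 L V y (F y) (Z y) (W y)) x := by
  have h1 : DifferentiableAt ℝ (fun y => l3 L (y, V y) ((0 : Vec n), F y) ((0 : Vec n), Z y)
      ((0 : Vec n), W y)) x := by
    apply DifferentiableAt.clm_apply
    apply DifferentiableAt.clm_apply
    apply DifferentiableAt.clm_apply
    · exact phi3_diffAt hL hV hx
    · exact DifferentiableAt.prodMk (differentiableAt_const _) hF
    · exact DifferentiableAt.prodMk (differentiableAt_const _) hZ
    · exact DifferentiableAt.prodMk (differentiableAt_const _) hW
  exact h1.const_mul _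

/-- fderiv of the `gF` composite agrees with that of the `g2` composite on `Ω` -/
theorem gF_comp_fderiv_eq (hL : IsPseudoFinsler Ω A L) (hV : LAdmissible A Ω V) {x : Vec n}
    (hx : x ∈ Ω) (U W : Vec n → Vec n) :
    fderiv ℝ (fun y => gF L y (V y) (U y) (W y)) x
      = fderiv ℝ (fun y => g2 L V y (U y) (W y)) x := by
  apply Filter.EventuallyEq.fderiv_eq
  filter_upwards [hL.isOpen_base.mem_nhds hx] with y hy
  exact gF_V hL hV hy _ _

theorem CartanF_comp_fderiv_eq (hL : IsPseudoFinsler Ω A L) (hV : LAdmissible A Ω V) {x : Vec n}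
    (hx : x ∈ Ω) (F Z W : Vec n → Vec n) :
    fderiv ℝ (fun y => CartanF L y (V y) (F y) (Z y) (W y)) x
      = fderiv ℝ (fun y => C3 L V y (F y) (Z y) (W y)) x := by
  apply Filter.EventuallyEq.fderiv_eq
  filter_upwards [hL.isOpen_base.mem_nhds hx] with y hy
  exact CartanF_V hL hV hy _ _ _

end PF5
section PF6

variable {n : ℕ} {Ω : Set (Vec n)} {A : Set (Vec n × Vec n)} {L : Vec n × Vec n → ℝ}
  {V : Vec n → Vec n} {Γ : Vec n → Bil n}

theorem affine_contDiffOn (c : Vec n) (T : Vec n →L[ℝ] Vec n) (x : Vec n) :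
    ContDiffOn ℝ (⊤ : ℕ∞) (fun y => c + T (y - x)) Ω :=
  (contDiff_const.add (T.contDiff.comp (contDiff_id.sub contDiff_const))).contDiffOn

theorem affine_hasFDerivAt (c : Vec n) (T : Vec n →L[ℝ] Vec n) (x : Vec n) :
    HasFDerivAt (fun y => c + T (y - x)) T x := by
  have h : HasFDerivAt (fun y : Vec n => c + T (y - x)) (T.comp (ContinuousLinearMap.id ℝ (Vec n))) x := by
    exact (T.hasFDerivAt.comp x ((hasFDerivAt_id x).sub_const x)).const_add c
  simpa using h

/-- Pointwise version of almost g-compatibility for merely differentiable fields. -/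
theorem Pprime (hL : IsPseudoFinsler Ω A L) (hV : LAdmissible A Ω V)
    (hAC : AlmostGCompatible L Ω Γ V) {x : Vec n} (hx : x ∈ Ω)
    {U W : Vec n → Vec n} (hU : DifferentiableAt ℝ U x) (hW : DifferentiableAt ℝ W x)
    (d : Vec n) :
    fderiv ℝ (fun y => g2 L V y (U y) (W y)) x d
      = g2 L V x (fderiv ℝ U x d + Γ x d (U x)) (W x)
        + g2 L V x (U x) (fderiv ℝ W x d + Γ x d (W x))
        + 2 * C3 L V x (NN V Γ x d) (U x) (W x) := by
  set T₁ := fderiv ℝ U x with hT₁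
  set T₂ := fderiv ℝ W x with hT₂
  set U' : Vec n → Vec n := fun y => U x + T₁ (y - x) with hU'
  set W' : Vec n → Vec n := fun y => W x + T₂ (y - x) with hW'
  have hU'x : U' x = U x := by simp [hU']
  have hW'x : W' x = W x := by simp [hW']
  have hU'd : fderiv ℝ U' x = T₁ := (affine_hasFDerivAt (U x) T₁ x).fderiv
  have hW'd : fderiv ℝ W' x = T₂ := (affine_hasFDerivAt (W x) T₂ x).fderiv
  have hU'diff : DifferentiableAt ℝ U' x := (affine_hasFDerivAt (U x) T₁ x).differentiableAt
  have hW'diff : DifferentiableAt ℝ W' x := (affine_hasFDerivAt (W x) T₂ x).differentiableAt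
  have spec := hAC (fun _ => d) U' W' contDiffOn_const
    (affine_contDiffOn (U x) T₁ x) (affine_contDiffOn (W x) T₂ x) x hx
  -- rewrite the LHS of spec
  rw [gF_comp_fderiv_eq hL hV hx U' W'] at spec
  have hlhs : fderiv ℝ (fun y => g2 L V y (U' y) (W' y)) x d
      = fderiv ℝ (fun y => g2 L V y (U y) (W y)) x d := by
    rw [g2_comp_fderiv hL hV hx hU'diff hW'diff d, g2_comp_fderiv hL hV hx hU hW d,
      hU'd, hW'd, hU'x, hW'x]
  -- rewrite the RHS of spec
  unfold nablaVF at spec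
  rw [gF_V hL hV hx, gF_V hL hV hx, CartanF_V hL hV hx] at spec
  rw [hU'd, hW'd, hU'x, hW'x] at spec
  rw [← hlhs]
  convert spec using 3 <;> simp [NN]

/-- Master compatibility equation with constant fields. -/
theorem masterM (hL : IsPseudoFinsler Ω A L) (hV : LAdmissible A Ω V)
    (hAC : AlmostGCompatible L Ω Γ V) {x : Vec n} (hx : x ∈ Ω) (d u w : Vec n) :
    Dg L V x d u w
      = g2 L V x (Γ x d u) w + g2 L V x u (Γ x d w) + 2 * C3 L V x (NN V Γ x d) u w := by
  have h := Pprime hL hV hAC hx (U := fun _ => u) (W := fun _ => w)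
    (differentiableAt_const u) (differentiableAt_const w) d
  have hPR := g2_comp_fderiv hL hV hx (U := fun _ => u) (W := fun _ => w)
    (differentiableAt_const u) (differentiableAt_const w) d
  rw [hPR] at h
  simp only [fderiv_const, Pi.zero_apply, ContinuousLinearMap.zero_apply, g2_zerol, g2_zeror,
    add_zero, zero_add] at h
  simpa [g2_zerol, g2_zeror] using h
end PF6
section PF7

variable {n : ℕ} {Ω : Set (Vec n)} {A : Set (Vec n × Vec n)} {L : Vec n × Vec n → ℝ}
  {V : Vec n → Vec n} {Γ : Vec n → Bil n}

/-- standard basis vector -/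
def bas (n : ℕ) (i : Fin n) : Vec n := Pi.single i 1

theorem g2_suml {ι : Type*} (x : Vec n) (s : Finset ι) (f : ι → Vec n) (b : Vec n) :
    g2 L V x (∑ i ∈ s, f i) b = ∑ i ∈ s, g2 L V x (f i) b := by
  classical
  induction s using Finset.induction with
  | empty => simp [g2_zerol]
  | insert _ _ hns ih =>
    rw [Finset.sum_insert hns, Finset.sum_insert hns, g2_addl, ih]

theorem g2_sumr {ι : Type*} (x : Vec n) (s : Finset ι) (a : Vec n) (f : ι → Vec n) :
    g2 L V x a (∑ i ∈ s, f i) = ∑ i ∈ s, g2 L V x a (f i) := by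
  classical
  induction s using Finset.induction with
  | empty => simp [g2_zeror]
  | insert _ _ hns ih =>
    rw [Finset.sum_insert hns, Finset.sum_insert hns, g2_addr, ih]

theorem g2_expandl (x a b : Vec n) :
    g2 L V x a b = ∑ i, a i * g2 L V x (bas n i) b := by
  conv_lhs => rw [show a = ∑ i, Pi.single i (a i) from (Finset.univ_sum_single a).symm]
  rw [g2_suml]
  congr 1
  funext i
  rw [show (Pi.single i (a i) : Vec n) = a i • bas n i by
    rw [bas, ← Pi.single_smul, smul_eq_mul, mul_one], g2_smull]

theorem g2_expandr (x a b : Vec n) :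
    g2 L V x a b = ∑ i, b i * g2 L V x a (bas n i) := by
  conv_lhs => rw [show b = ∑ i, Pi.single i (b i) from (Finset.univ_sum_single b).symm]
  rw [g2_sumr]
  congr 1
  funext i
  rw [show (Pi.single i (b i) : Vec n) = b i • bas n i by
    rw [bas, ← Pi.single_smul, smul_eq_mul, mul_one], g2_smulr]

/-- the Gram matrix of `g2` in the standard basis -/
def gMat (L : Vec n × Vec n → ℝ) (V : Vec n → Vec n) (x : Vec n) :
    Matrix (Fin n) (Fin n) ℝ :=
  Matrix.of fun j i => g2 L V x (bas n i) (bas n j)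

theorem gMat_mulVec (x : Vec n) (a : Vec n) (j : Fin n) :
    (gMat L V x).mulVec a j = g2 L V x a (bas n j) := by
  rw [g2_expandl]
  simp only [Matrix.mulVec, dotProduct, gMat, Matrix.of_apply]
  exact Finset.sum_congr rfl fun i _ => mul_comm _ _

theorem gMat_isUnit (hL : IsPseudoFinsler Ω A L) (hV : LAdmissible A Ω V) {x : Vec n}
    (hx : x ∈ Ω) : IsUnit (gMat L V x) := by
  rw [← Matrix.mulVec_injective_iff_isUnit]
  intro a b hab
  have key : ∀ c : Vec n, (gMat L V x).mulVec c = 0 → c = 0 := by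
    intro c hc
    have hz : ∀ z : Vec n, gF L x (V x) c z = 0 := by
      intro z
      rw [gF_V hL hV hx, g2_expandr]
      have : ∀ j, g2 L V x c (bas n j) = 0 := by
        intro j
        rw [← gMat_mulVec, hc]
        rfl
      simp [this]
    have := hL.g_nondeg (x, V x) (hV.2 x hx) c hz
    exact this
  have hsub : (gMat L V x).mulVec (a - b) = 0 := by
    have : (gMat L V x).mulVec a - (gMat L V x).mulVec b = 0 := by rw [hab]; simp
    rw [← this]
    funext j
    simp [Matrix.mulVec, dotProduct, mul_sub, Finset.sum_sub_distrib, Pi.sub_apply]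
  have := key _ hsub
  exact sub_eq_zero.mp this

theorem gMat_det_ne_zero (hL : IsPseudoFinsler Ω A L) (hV : LAdmissible A Ω V) {x : Vec n}
    (hx : x ∈ Ω) : (gMat L V x).det ≠ 0 := by
  have := (Matrix.isUnit_iff_isUnit_det _).mp (gMat_isUnit hL hV hx)
  exact this.ne_zero

/-- solving a linear system with the Gram matrix -/
theorem g2_solve (hL : IsPseudoFinsler Ω A L) (hV : LAdmissible A Ω V) {x : Vec n}
    (hx : x ∈ Ω) (a : Vec n) (c : Fin n → ℝ) (h : ∀ j, g2 L V x a (bas n j) = c j) :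
    a = (gMat L V x)⁻¹.mulVec c := by
  have h1 : (gMat L V x).mulVec a = c := by
    funext j
    rw [gMat_mulVec]
    exact h j
  have h2 : (gMat L V x)⁻¹.mulVec ((gMat L V x).mulVec a) = a := by
    rw [Matrix.mulVec_mulVec,
      Matrix.nonsing_inv_mul _ ((Matrix.isUnit_iff_isUnit_det _).mp (gMat_isUnit hL hV hx)),
      Matrix.one_mulVec]
  rw [← h1, h2]

-- differentiability helpers for determinants and inverses, entrywise
theorem diffAt_finset_prod {ι : Type*} {x : Vec n} (s : Finset ι) (f : ι → Vec n → ℝ)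
    (h : ∀ i ∈ s, DifferentiableAt ℝ (f i) x) :
    DifferentiableAt ℝ (fun y => ∏ i ∈ s, f i y) x := by
  classical
  induction s using Finset.induction with
  | empty => simpa using differentiableAt_const (1 : ℝ)
  | @insert a s hns ih =>
    have : (fun y => ∏ i ∈ insert a s, f i y) = fun y => f a y * ∏ i ∈ s, f i y := by
      funext y; rw [Finset.prod_insert hns]
    rw [this]
    exact (h a (Finset.mem_insert_self a s)).mul
      (ih fun i hi => h i (Finset.mem_insert_of_mem hi))

theorem diffAt_det_comp {x : Vec n} {f : Vec n → Matrix (Fin n) (Fin n) ℝ}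
    (hf : ∀ i j, DifferentiableAt ℝ (fun y => f y i j) x) :
    DifferentiableAt ℝ (fun y => (f y).det) x := by
  have : (fun y => (f y).det)
      = fun y => ∑ σ : Equiv.Perm (Fin n), ((Equiv.Perm.sign σ : ℤ) : ℝ)
        * ∏ i, f y (σ i) i := by
    funext y
    rw [Matrix.det_apply]
    refine Finset.sum_congr rfl fun σ _ => ?_
    rw [show (Equiv.Perm.sign σ : ℤˣ) • ∏ i, f y (σ i) i
      = ((Equiv.Perm.sign σ : ℤ) : ℝ) * ∏ i, f y (σ i) i from ?_]
    rw [Units.smul_def, zsmul_eq_mul]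
  rw [this]
  apply DifferentiableAt.fun_sum
  intro σ _
  exact (differentiableAt_const _).mul
    (diffAt_finset_prod _ _ fun i _ => hf (σ i) i)

theorem diffAt_adjugate_comp {x : Vec n} {f : Vec n → Matrix (Fin n) (Fin n) ℝ}
    (hf : ∀ i j, DifferentiableAt ℝ (fun y => f y i j) x) (i j : Fin n) :
    DifferentiableAt ℝ (fun y => (f y).adjugate i j) x := by
  have : (fun y => (f y).adjugate i j)
      = fun y => ((f y).updateRow j (Pi.single i 1)).det := by
    funext y; rw [Matrix.adjugate_apply]
  rw [this]
  apply diffAt_det_comp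
  intro k l
  by_cases hk : k = j
  · subst hk
    simp only [Matrix.updateRow_self]
    exact differentiableAt_const _
  · simp only [Matrix.updateRow_ne hk]
    exact hf k l

theorem diffAt_invMulVec {x : Vec n} {f : Vec n → Matrix (Fin n) (Fin n) ℝ}
    {c : Vec n → (Fin n → ℝ)}
    (hf : ∀ i j, DifferentiableAt ℝ (fun y => f y i j) x)
    (hdet : (f x).det ≠ 0)
    (hc : ∀ j, DifferentiableAt ℝ (fun y => c y j) x) :
    DifferentiableAt ℝ (fun y => (f y)⁻¹.mulVec (c y)) x := by
  have hinv : ∀ k l, (fun y => (f y)⁻¹ k l)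
      = fun y => ((f y).det)⁻¹ * (f y).adjugate k l := by
    intro k l
    funext y
    rw [Matrix.inv_def, Ring.inverse_eq_inv]
    simp [Matrix.smul_apply]
  rw [show (fun y => (f y)⁻¹.mulVec (c y))
      = fun y => (fun k => ∑ l, (f y)⁻¹ k l * c y l) from by
    funext y; funext k; simp [Matrix.mulVec, dotProduct]]
  apply differentiableAt_pi.mpr
  intro k
  apply DifferentiableAt.fun_sum
  intro l _
  have h1 : DifferentiableAt ℝ (fun y => (f y)⁻¹ k l) x := by
    rw [hinv k l]
    exact ((diffAt_det_comp hf).inv hdet).mul (diffAt_adjugate_comp hf k l)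
  exact h1.mul (hc l)

end PF7
section PF8

variable {n : ℕ} {Ω : Set (Vec n)} {A : Set (Vec n × Vec n)} {L : Vec n × Vec n → ℝ}
  {V : Vec n → Vec n} {Γ : Vec n → Bil n}

/-- symmetrized derivative combination for the Koszul formula -/
def SS (L : Vec n × Vec n → ℝ) (V : Vec n → Vec n) (x u w z : Vec n) : ℝ :=
  Dg L V x u w z + Dg L V x w u z - Dg L V x z u w

theorem koszul (hL : IsPseudoFinsler Ω A L) (hV : LAdmissible A Ω V)
    (hAC : AlmostGCompatible L Ω Γ V) (hTF : TorsionFree Ω Γ) {x : Vec n} (hx : x ∈ Ω)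
    (u w z : Vec n) :
    2 * g2 L V x (Γ x u w) z
      = SS L V x u w z - 2 * C3 L V x (NN V Γ x u) w z - 2 * C3 L V x (NN V Γ x w) u z
        + 2 * C3 L V x (NN V Γ x z) u w := by
  have m1 := masterM hL hV hAC hx u w z
  have m2 := masterM hL hV hAC hx w u z
  have m3 := masterM hL hV hAC hx z u w
  have t1 : Γ x w u = Γ x u w := hTF x hx w u
  have t2 : Γ x z u = Γ x u z := hTF x hx z u
  have t3 : Γ x z w = Γ x w z := hTF x hx z w
  have s1 : g2 L V x w (Γ x u z) = g2 L V x (Γ x u z) w := g2_symm hL hV hx _ _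
  unfold SS
  rw [m1, m2, m3, t1, t2, t3, s1]
  ring

theorem koszul_VV (hL : IsPseudoFinsler Ω A L) (hV : LAdmissible A Ω V)
    (hAC : AlmostGCompatible L Ω Γ V) (hTF : TorsionFree Ω Γ) {x : Vec n} (hx : x ∈ Ω)
    (z : Vec n) :
    g2 L V x (Γ x (V x) (V x)) z = (1 / 2) * SS L V x (V x) (V x) z := by
  have h := koszul hL hV hAC hTF hx (V x) (V x) z
  rw [C3_euler2 hL hV hx, C3_euler2 hL hV hx] at h
  linarith

theorem koszul_UV (hL : IsPseudoFinsler Ω A L) (hV : LAdmissible A Ω V)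
    (hAC : AlmostGCompatible L Ω Γ V) (hTF : TorsionFree Ω Γ) {x : Vec n} (hx : x ∈ Ω)
    (u z : Vec n) :
    g2 L V x (Γ x u (V x)) z
      = (1 / 2) * SS L V x u (V x) z - C3 L V x (NN V Γ x (V x)) u z := by
  have h := koszul hL hV hAC hTF hx u (V x) z
  rw [C3_euler2 hL hV hx, C3_euler3 hL hV hx] at h
  linarith

theorem koszul_full (hL : IsPseudoFinsler Ω A L) (hV : LAdmissible A Ω V)
    (hAC : AlmostGCompatible L Ω Γ V) (hTF : TorsionFree Ω Γ) {x : Vec n} (hx : x ∈ Ω)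
    (u w z : Vec n) :
    g2 L V x (Γ x u w) z
      = (1 / 2) * SS L V x u w z - C3 L V x (NN V Γ x u) w z - C3 L V x (NN V Γ x w) u z
        + C3 L V x (NN V Γ x z) u w := by
  have h := koszul hL hV hAC hTF hx u w z
  linarith

/-- candidate for `Γ x (V x) (V x)` -/
def qfun (L : Vec n × Vec n → ℝ) (V : Vec n → Vec n) (x : Vec n) : Vec n :=
  (gMat L V x)⁻¹.mulVec fun j => (1 / 2) * SS L V x (V x) (V x) (bas n j)

/-- candidate for `∇_V V` -/
def NVfun (L : Vec n × Vec n → ℝ) (V : Vec n → Vec n) (x : Vec n) : Vec n :=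
  fderiv ℝ V x (V x) + qfun L V x

/-- candidate for `Γ x (U x) (V x)` -/
def Pfun (L : Vec n × Vec n → ℝ) (V U : Vec n → Vec n) (x : Vec n) : Vec n :=
  (gMat L V x)⁻¹.mulVec fun j =>
    (1 / 2) * SS L V x (U x) (V x) (bas n j) - C3 L V x (NVfun L V x) (U x) (bas n j)

/-- candidate for `∇_U V` -/
def Nfun (L : Vec n × Vec n → ℝ) (V U : Vec n → Vec n) (x : Vec n) : Vec n :=
  fderiv ℝ V x (U x) + Pfun L V U x

/-- candidate for `Γ x (Y x) (Z x)` -/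
def Gfun (L : Vec n × Vec n → ℝ) (V Y Z : Vec n → Vec n) (x : Vec n) : Vec n :=
  (gMat L V x)⁻¹.mulVec fun j =>
    (1 / 2) * SS L V x (Y x) (Z x) (bas n j) - C3 L V x (Nfun L V Y x) (Z x) (bas n j)
      - C3 L V x (Nfun L V Z x) (Y x) (bas n j)
      + C3 L V x (Nfun L V (fun _ => bas n j) x) (Y x) (Z x)

theorem q_eq (hL : IsPseudoFinsler Ω A L) (hV : LAdmissible A Ω V)
    (hAC : AlmostGCompatible L Ω Γ V) (hTF : TorsionFree Ω Γ) {x : Vec n} (hx : x ∈ Ω) :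
    Γ x (V x) (V x) = qfun L V x :=
  g2_solve hL hV hx _ _ fun j => koszul_VV hL hV hAC hTF hx (bas n j)

theorem NV_eq (hL : IsPseudoFinsler Ω A L) (hV : LAdmissible A Ω V)
    (hAC : AlmostGCompatible L Ω Γ V) (hTF : TorsionFree Ω Γ) {x : Vec n} (hx : x ∈ Ω) :
    NN V Γ x (V x) = NVfun L V x := by
  unfold NN NVfun
  rw [q_eq hL hV hAC hTF hx]

theorem P_eq (hL : IsPseudoFinsler Ω A L) (hV : LAdmissible A Ω V)
    (hAC : AlmostGCompatible L Ω Γ V) (hTF : TorsionFree Ω Γ) {x : Vec n} (hx : x ∈ Ω)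
    (U : Vec n → Vec n) : Γ x (U x) (V x) = Pfun L V U x := by
  apply g2_solve hL hV hx
  intro j
  rw [koszul_UV hL hV hAC hTF hx (U x) (bas n j), NV_eq hL hV hAC hTF hx]

theorem N_eq (hL : IsPseudoFinsler Ω A L) (hV : LAdmissible A Ω V)
    (hAC : AlmostGCompatible L Ω Γ V) (hTF : TorsionFree Ω Γ) {x : Vec n} (hx : x ∈ Ω)
    (U : Vec n → Vec n) : NN V Γ x (U x) = Nfun L V U x := by
  unfold NN Nfun
  rw [P_eq hL hV hAC hTF hx U]

theorem G_eq (hL : IsPseudoFinsler Ω A L) (hV : LAdmissible A Ω V)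
    (hAC : AlmostGCompatible L Ω Γ V) (hTF : TorsionFree Ω Γ) {x : Vec n} (hx : x ∈ Ω)
    (Y Z : Vec n → Vec n) : Γ x (Y x) (Z x) = Gfun L V Y Z x := by
  apply g2_solve hL hV hx
  intro j
  rw [koszul_full hL hV hAC hTF hx (Y x) (Z x) (bas n j),
    N_eq hL hV hAC hTF hx Y, N_eq hL hV hAC hTF hx Z,
    N_eq hL hV hAC hTF hx (fun _ => bas n j)]

end PF8
section PF9

variable {n : ℕ} {Ω : Set (Vec n)} {A : Set (Vec n × Vec n)} {L : Vec n × Vec n → ℝ}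
  {V : Vec n → Vec n} {Γ : Vec n → Bil n}

theorem fderivV_diffAt (hL : IsPseudoFinsler Ω A L) (hV : LAdmissible A Ω V) {x : Vec n}
    (hx : x ∈ Ω) : DifferentiableAt ℝ (fderiv ℝ V) x :=
  (((hV.1.fderiv_of_isOpen hL.isOpen_base (m := 1) (WithTop.coe_le_coe.mpr le_top)) x hx).contDiffAt
    (hL.isOpen_base.mem_nhds hx)).differentiableAt (by simp : (1 : WithTop ℕ∞) ≠ 0)

theorem Dg_comp_diffAt (hL : IsPseudoFinsler Ω A L) (hV : LAdmissible A Ω V) {x : Vec n}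
    (hx : x ∈ Ω) {P Q R : Vec n → Vec n} (hP : DifferentiableAt ℝ P x)
    (hQ : DifferentiableAt ℝ Q x) (hR : DifferentiableAt ℝ R x) :
    DifferentiableAt ℝ (fun y => Dg L V y (P y) (Q y) (R y)) x := by
  have harg1 : DifferentiableAt ℝ
      (fun y => ((P y, fderiv ℝ V y (P y)) : Vec n × Vec n)) x :=
    hP.prodMk ((fderivV_diffAt hL hV hx).clm_apply hP)
  have h : DifferentiableAt ℝ (fun y => l3 L (y, V y) (P y, fderiv ℝ V y (P y))
      ((0 : Vec n), Q y) ((0 : Vec n), R y)) x := by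
    apply DifferentiableAt.clm_apply
    apply DifferentiableAt.clm_apply
    apply DifferentiableAt.clm_apply
    · exact phi3_diffAt hL hV hx
    · exact harg1
    · exact DifferentiableAt.prodMk (differentiableAt_const (0 : Vec n)) hQ
    · exact DifferentiableAt.prodMk (differentiableAt_const (0 : Vec n)) hR
  unfold Dg
  exact h.const_mul _

theorem SS_comp_diffAt (hL : IsPseudoFinsler Ω A L) (hV : LAdmissible A Ω V) {x : Vec n}
    (hx : x ∈ Ω) {P Q R : Vec n → Vec n} (hP : DifferentiableAt ℝ P x)
    (hQ : DifferentiableAt ℝ Q x) (hR : DifferentiableAt ℝ R x) :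
    DifferentiableAt ℝ (fun y => SS L V y (P y) (Q y) (R y)) x := by
  unfold SS
  exact ((Dg_comp_diffAt hL hV hx hP hQ hR).add
    (Dg_comp_diffAt hL hV hx hQ hP hR)).sub (Dg_comp_diffAt hL hV hx hR hP hQ)

theorem gMat_entry_diffAt (hL : IsPseudoFinsler Ω A L) (hV : LAdmissible A Ω V) {x : Vec n}
    (hx : x ∈ Ω) (i j : Fin n) :
    DifferentiableAt ℝ (fun y => gMat L V y i j) x := by
  have : (fun y => gMat L V y i j) = fun y => g2 L V y (bas n j) (bas n i) := rfl
  rw [this]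
  exact g2_comp_diffAt hL hV hx (differentiableAt_const _) (differentiableAt_const _)

theorem qfun_diffAt (hL : IsPseudoFinsler Ω A L) (hV : LAdmissible A Ω V)
    {x : Vec n} (hx : x ∈ Ω) : DifferentiableAt ℝ (qfun L V) x := by
  apply diffAt_invMulVec (gMat_entry_diffAt hL hV hx) (gMat_det_ne_zero hL hV hx)
  intro j
  exact (SS_comp_diffAt hL hV hx (V_diffAt hL hV hx) (V_diffAt hL hV hx)
    (differentiableAt_const _)).const_mul _

theorem NVfun_diffAt (hL : IsPseudoFinsler Ω A L) (hV : LAdmissible A Ω V)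
    {x : Vec n} (hx : x ∈ Ω) : DifferentiableAt ℝ (NVfun L V) x :=
  ((fderivV_diffAt hL hV hx).clm_apply (V_diffAt hL hV hx)).add (qfun_diffAt hL hV hx)

theorem Pfun_diffAt (hL : IsPseudoFinsler Ω A L) (hV : LAdmissible A Ω V)
    {x : Vec n} (hx : x ∈ Ω) {U : Vec n → Vec n} (hU : DifferentiableAt ℝ U x) :
    DifferentiableAt ℝ (Pfun L V U) x := by
  apply diffAt_invMulVec (gMat_entry_diffAt hL hV hx) (gMat_det_ne_zero hL hV hx)
  intro j
  exact ((SS_comp_diffAt hL hV hx hU (V_diffAt hL hV hx)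
    (differentiableAt_const _)).const_mul _).sub
    (C3_comp_diffAt hL hV hx (NVfun_diffAt hL hV hx) hU (differentiableAt_const _))

theorem Nfun_diffAt (hL : IsPseudoFinsler Ω A L) (hV : LAdmissible A Ω V)
    {x : Vec n} (hx : x ∈ Ω) {U : Vec n → Vec n} (hU : DifferentiableAt ℝ U x) :
    DifferentiableAt ℝ (Nfun L V U) x :=
  ((fderivV_diffAt hL hV hx).clm_apply hU).add (Pfun_diffAt hL hV hx hU)

theorem Gfun_diffAt (hL : IsPseudoFinsler Ω A L) (hV : LAdmissible A Ω V)
    {x : Vec n} (hx : x ∈ Ω) {Y Z : Vec n → Vec n} (hY : DifferentiableAt ℝ Y x)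
    (hZ : DifferentiableAt ℝ Z x) :
    DifferentiableAt ℝ (Gfun L V Y Z) x := by
  apply diffAt_invMulVec (gMat_entry_diffAt hL hV hx) (gMat_det_ne_zero hL hV hx)
  intro j
  have h1 := (SS_comp_diffAt hL hV hx hY hZ (differentiableAt_const (bas n j))).const_mul
    (1 / 2 : ℝ)
  have h2 := C3_comp_diffAt hL hV hx (Nfun_diffAt hL hV hx hY) hZ
    (differentiableAt_const (bas n j))
  have h3 := C3_comp_diffAt hL hV hx (Nfun_diffAt hL hV hx hZ) hY
    (differentiableAt_const (bas n j))
  have h4 := C3_comp_diffAt hL hV hx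
    (Nfun_diffAt hL hV hx (differentiableAt_const (bas n j))) hY hZ
  exact ((h1.sub h2).sub h3).add h4

/-- KEY REGULARITY: the connection composite is differentiable on `Ω`. -/
theorem Gamma_comp_diffAt (hL : IsPseudoFinsler Ω A L) (hV : LAdmissible A Ω V)
    (hAC : AlmostGCompatible L Ω Γ V) (hTF : TorsionFree Ω Γ) {x : Vec n} (hx : x ∈ Ω)
    {Y Z : Vec n → Vec n} (hY : DifferentiableAt ℝ Y x) (hZ : DifferentiableAt ℝ Z x) :
    DifferentiableAt ℝ (fun y => Γ y (Y y) (Z y)) x := by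
  have hev : (fun y => Γ y (Y y) (Z y)) =ᶠ[nhds x] Gfun L V Y Z := by
    filter_upwards [hL.isOpen_base.mem_nhds hx] with y hy
    exact G_eq hL hV hAC hTF hy Y Z
  exact (Gfun_diffAt hL hV hx hY hZ).congr_of_eventuallyEq hev

end PF9
section PF10

variable {n : ℕ} {Ω : Set (Vec n)} {A : Set (Vec n × Vec n)} {L : Vec n × Vec n → ℝ}
  {V : Vec n → Vec n} {Γ : Vec n → Bil n}

theorem g2_subl (x a a' b : Vec n) :
    g2 L V x (a - a') b = g2 L V x a b - g2 L V x a' b := by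
  have h : a = (a - a') + a' := by abel
  conv_rhs => rw [h]
  rw [g2_addl]; ring

theorem g2_subr (x a b b' : Vec n) :
    g2 L V x a (b - b') = g2 L V x a b - g2 L V x a b' := by
  have h : b = (b - b') + b' := by abel
  conv_rhs => rw [h]
  rw [g2_addr]; ring

theorem g2_comp_contDiffOn (hL : IsPseudoFinsler Ω A L) (hV : LAdmissible A Ω V)
    {P Q : Vec n → Vec n} (hP : ContDiffOn ℝ (⊤ : ℕ∞) P Ω) (hQ : ContDiffOn ℝ (⊤ : ℕ∞) Q Ω) :
    ContDiffOn ℝ (⊤ : ℕ∞) (fun y => g2 L V y (P y) (Q y)) Ω := by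
  have h2 : ContDiffOn ℝ (⊤ : ℕ∞) (fun y => l2 L (y, V y)) Ω :=
    hL.l2_smooth.comp (contDiffOn_id.prodMk hV.1) fun y hy => hV.2 y hy
  have h3 := (h2.clm_apply ((contDiffOn_const (c := (0 : Vec n))).prodMk hP)).clm_apply ((contDiffOn_const (c := (0 : Vec n))).prodMk hQ)
  exact contDiffOn_const.mul h3

end PF10
/-- `g_V(R^V(X,Y)Z, W) + g_V(R^V(X,Y)W, Z) = 2 B^V(X,Y,Z,W)`. -/
theorem curvature_symmetry_B {n : ℕ} (hn : 1 ≤ n)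
    (Ω : Set (Vec n)) (A : Set (Vec n × Vec n)) (L : Vec n × Vec n → ℝ)
    (hL : IsPseudoFinsler Ω A L) (V : Vec n → Vec n) (hV : LAdmissible A Ω V)
    (Γ : Vec n → Bil n) (hTF : TorsionFree Ω Γ) (hAC : AlmostGCompatible L Ω Γ V) :
    ∀ X Y Z W : Vec n → Vec n,
      ContDiffOn ℝ (⊤ : ℕ∞) X Ω → ContDiffOn ℝ (⊤ : ℕ∞) Y Ω → ContDiffOn ℝ (⊤ : ℕ∞) Z Ω → ContDiffOn ℝ (⊤ : ℕ∞) W Ω →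
      ∀ x ∈ Ω,
        gF L x (V x) (curvVF Γ X Y Z x) (W x) + gF L x (V x) (curvVF Γ X Y W x) (Z x) =
          2 * BTensor L Γ V X Y Z W x := by
  intro X Y Z W hX hY hZ hW x hx
  have hΩo : IsOpen Ω := hL.isOpen_base
  have dat : ∀ {U : Vec n → Vec n}, ContDiffOn ℝ (⊤ : ℕ∞) U Ω → ∀ {y : Vec n}, y ∈ Ω →
      DifferentiableAt ℝ U y := fun {U} hU {y} hy =>
    ((hU y hy).contDiffAt (hΩo.mem_nhds hy)).differentiableAt (by simp)
  have dfd : ∀ {U : Vec n → Vec n}, ContDiffOn ℝ (⊤ : ℕ∞) U Ω → ∀ {y : Vec n}, y ∈ Ω →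
      DifferentiableAt ℝ (fderiv ℝ U) y := fun {U} hU {y} hy =>
    (((hU.fderiv_of_isOpen hΩo (m := 1) (WithTop.coe_le_coe.mpr le_top)) y hy).contDiffAt (hΩo.mem_nhds hy)).differentiableAt
      (by simp : (1 : WithTop ℕ∞) ≠ 0)
  have dnab : ∀ {P Q : Vec n → Vec n}, ContDiffOn ℝ (⊤ : ℕ∞) P Ω → ContDiffOn ℝ (⊤ : ℕ∞) Q Ω →
      ∀ {y : Vec n}, y ∈ Ω → DifferentiableAt ℝ (nablaVF Γ P Q) y := by
    intro P Q hP hQ y hy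
    have h1 : DifferentiableAt ℝ (fun y' => fderiv ℝ Q y' (P y') + Γ y' (P y') (Q y')) y :=
      ((dfd hQ hy).clm_apply (dat hP hy)).add
        (Gamma_comp_diffAt hL hV hAC hTF hy (dat hP hy) (dat hQ hy))
    exact h1
  have hVsm := hV.1
  have hGsm : ContDiffOn ℝ (⊤ : ℕ∞) (fun y => g2 L V y (Z y) (W y)) Ω := g2_comp_contDiffOn hL hV hZ hW
  have hTd : DifferentiableAt ℝ (fderiv ℝ (fun y' => g2 L V y' (Z y') (W y'))) x :=
    (((hGsm.fderiv_of_isOpen hΩo (m := 1) (WithTop.coe_le_coe.mpr le_top)) x hx).contDiffAt (hΩo.mem_nhds hx)).differentiableAt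
      (by simp : (1 : WithTop ℕ∞) ≠ 0)
  have hsym : IsSymmSndFDerivAt ℝ (fun y' => g2 L V y' (Z y') (W y')) x :=
    ((hGsm x hx).contDiffAt (hΩo.mem_nhds hx)).isSymmSndFDerivAt (by rw [minSmoothness_of_isRCLikeNormedField]; exact WithTop.coe_le_coe.mpr le_top)
  -- the commutation identity from symmetry of second derivatives
  have star : fderiv ℝ (fun y => fderiv ℝ (fun y' => g2 L V y' (Z y') (W y')) y (Y y)) x (X x)
      - fderiv ℝ (fun y => fderiv ℝ (fun y' => g2 L V y' (Z y') (W y')) y (X y)) x (Y x)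
      = fderiv ℝ (fun y' => g2 L V y' (Z y') (W y')) x (lieVF X Y x) := by
    rw [fderiv_clm_apply hTd (dat hY hx), fderiv_clm_apply hTd (dat hX hx)]
    simp only [ContinuousLinearMap.add_apply, ContinuousLinearMap.coe_comp',
      Function.comp_apply, ContinuousLinearMap.flip_apply]
    rw [hsym (X x) (Y x)]
    unfold lieVF
    rw [map_sub]
    ring
  -- eventual identification of the first derivative via compatibility
  have hHY : (fun y => fderiv ℝ (fun y' => g2 L V y' (Z y') (W y')) y (Y y)) =ᶠ[nhds x]
      (fun y => g2 L V y (nablaVF Γ Y Z y) (W y) + g2 L V y (Z y) (nablaVF Γ Y W y)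
        + 2 * C3 L V y (nablaVF Γ Y V y) (Z y) (W y)) := by
    filter_upwards [hΩo.mem_nhds hx] with y hy
    exact Pprime hL hV hAC hy (dat hZ hy) (dat hW hy) (Y y)
  have hHX : (fun y => fderiv ℝ (fun y' => g2 L V y' (Z y') (W y')) y (X y)) =ᶠ[nhds x]
      (fun y => g2 L V y (nablaVF Γ X Z y) (W y) + g2 L V y (Z y) (nablaVF Γ X W y)
        + 2 * C3 L V y (nablaVF Γ X V y) (Z y) (W y)) := by
    filter_upwards [hΩo.mem_nhds hx] with y hy
    exact Pprime hL hV hAC hy (dat hZ hy) (dat hW hy) (X y)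
  -- differentiability of the summands
  have dF1Y : DifferentiableAt ℝ (fun y => g2 L V y (nablaVF Γ Y Z y) (W y)) x :=
    g2_comp_diffAt hL hV hx (dnab hY hZ hx) (dat hW hx)
  have dF2Y : DifferentiableAt ℝ (fun y => g2 L V y (Z y) (nablaVF Γ Y W y)) x :=
    g2_comp_diffAt hL hV hx (dat hZ hx) (dnab hY hW hx)
  have dF3Y : DifferentiableAt ℝ (fun y => C3 L V y (nablaVF Γ Y V y) (Z y) (W y)) x :=
    C3_comp_diffAt hL hV hx (dnab hY hVsm hx) (dat hZ hx) (dat hW hx)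
  have dF1X : DifferentiableAt ℝ (fun y => g2 L V y (nablaVF Γ X Z y) (W y)) x :=
    g2_comp_diffAt hL hV hx (dnab hX hZ hx) (dat hW hx)
  have dF2X : DifferentiableAt ℝ (fun y => g2 L V y (Z y) (nablaVF Γ X W y)) x :=
    g2_comp_diffAt hL hV hx (dat hZ hx) (dnab hX hW hx)
  have dF3X : DifferentiableAt ℝ (fun y => C3 L V y (nablaVF Γ X V y) (Z y) (W y)) x :=
    C3_comp_diffAt hL hV hx (dnab hX hVsm hx) (dat hZ hx) (dat hW hx)
  -- expansions of the individual derivatives via Pprime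
  have e1Y : fderiv ℝ (fun y => g2 L V y (nablaVF Γ Y Z y) (W y)) x (X x)
      = g2 L V x (nablaVF Γ X (nablaVF Γ Y Z) x) (W x)
        + g2 L V x (nablaVF Γ Y Z x) (nablaVF Γ X W x)
        + 2 * C3 L V x (nablaVF Γ X V x) (nablaVF Γ Y Z x) (W x) :=
    Pprime hL hV hAC hx (dnab hY hZ hx) (dat hW hx) (X x)
  have e2Y : fderiv ℝ (fun y => g2 L V y (Z y) (nablaVF Γ Y W y)) x (X x)
      = g2 L V x (nablaVF Γ X Z x) (nablaVF Γ Y W x)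
        + g2 L V x (Z x) (nablaVF Γ X (nablaVF Γ Y W) x)
        + 2 * C3 L V x (nablaVF Γ X V x) (Z x) (nablaVF Γ Y W x) :=
    Pprime hL hV hAC hx (dat hZ hx) (dnab hY hW hx) (X x)
  have e1X : fderiv ℝ (fun y => g2 L V y (nablaVF Γ X Z y) (W y)) x (Y x)
      = g2 L V x (nablaVF Γ Y (nablaVF Γ X Z) x) (W x)
        + g2 L V x (nablaVF Γ X Z x) (nablaVF Γ Y W x)
        + 2 * C3 L V x (nablaVF Γ Y V x) (nablaVF Γ X Z x) (W x) :=
    Pprime hL hV hAC hx (dnab hX hZ hx) (dat hW hx) (Y x)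
  have e2X : fderiv ℝ (fun y => g2 L V y (Z y) (nablaVF Γ X W y)) x (Y x)
      = g2 L V x (nablaVF Γ Y Z x) (nablaVF Γ X W x)
        + g2 L V x (Z x) (nablaVF Γ Y (nablaVF Γ X W) x)
        + 2 * C3 L V x (nablaVF Γ Y V x) (Z x) (nablaVF Γ X W x) :=
    Pprime hL hV hAC hx (dat hZ hx) (dnab hX hW hx) (Y x)
  -- the Cartan-derivative terms, via nablaCartan
  have ncY : nablaCartan L Γ V X (nablaVF Γ Y V) Z W x
      = fderiv ℝ (fun y => C3 L V y (nablaVF Γ Y V y) (Z y) (W y)) x (X x)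
        - C3 L V x (nablaVF Γ X (nablaVF Γ Y V) x) (Z x) (W x)
        - C3 L V x (nablaVF Γ Y V x) (nablaVF Γ X Z x) (W x)
        - C3 L V x (nablaVF Γ Y V x) (Z x) (nablaVF Γ X W x) := by
    unfold nablaCartan
    rw [CartanF_comp_fderiv_eq hL hV hx, CartanF_V hL hV hx, CartanF_V hL hV hx,
      CartanF_V hL hV hx]
  have ncX : nablaCartan L Γ V Y (nablaVF Γ X V) Z W x
      = fderiv ℝ (fun y => C3 L V y (nablaVF Γ X V y) (Z y) (W y)) x (Y x)
        - C3 L V x (nablaVF Γ Y (nablaVF Γ X V) x) (Z x) (W x)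
        - C3 L V x (nablaVF Γ X V x) (nablaVF Γ Y Z x) (W x)
        - C3 L V x (nablaVF Γ X V x) (Z x) (nablaVF Γ Y W x) := by
    unfold nablaCartan
    rw [CartanF_comp_fderiv_eq hL hV hx, CartanF_V hL hV hx, CartanF_V hL hV hx,
      CartanF_V hL hV hx]
  -- split the sums
  have splitY : fderiv ℝ (fun y => fderiv ℝ (fun y' => g2 L V y' (Z y') (W y')) y (Y y)) x (X x)
      = fderiv ℝ (fun y => g2 L V y (nablaVF Γ Y Z y) (W y)) x (X x)
        + fderiv ℝ (fun y => g2 L V y (Z y) (nablaVF Γ Y W y)) x (X x)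
        + 2 * fderiv ℝ (fun y => C3 L V y (nablaVF Γ Y V y) (Z y) (W y)) x (X x) := by
    rw [hHY.fderiv_eq, fderiv_fun_add (dF1Y.fun_add dF2Y) (dF3Y.const_mul (2 : ℝ)),
      fderiv_fun_add dF1Y dF2Y, fderiv_const_mul dF3Y]
    simp only [ContinuousLinearMap.add_apply, ContinuousLinearMap.smul_apply, smul_eq_mul]
  have splitX : fderiv ℝ (fun y => fderiv ℝ (fun y' => g2 L V y' (Z y') (W y')) y (X y)) x (Y x)
      = fderiv ℝ (fun y => g2 L V y (nablaVF Γ X Z y) (W y)) x (Y x)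
        + fderiv ℝ (fun y => g2 L V y (Z y) (nablaVF Γ X W y)) x (Y x)
        + 2 * fderiv ℝ (fun y => C3 L V y (nablaVF Γ X V y) (Z y) (W y)) x (Y x) := by
    rw [hHX.fderiv_eq, fderiv_fun_add (dF1X.fun_add dF2X) (dF3X.const_mul (2 : ℝ)),
      fderiv_fun_add dF1X dF2X, fderiv_const_mul dF3X]
    simp only [ContinuousLinearMap.add_apply, ContinuousLinearMap.smul_apply, smul_eq_mul]
  -- the Lie-bracket term
  have elie : fderiv ℝ (fun y' => g2 L V y' (Z y') (W y')) x (lieVF X Y x)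
      = g2 L V x (nablaVF Γ (lieVF X Y) Z x) (W x)
        + g2 L V x (Z x) (nablaVF Γ (lieVF X Y) W x)
        + 2 * C3 L V x (nablaVF Γ (lieVF X Y) V x) (Z x) (W x) :=
    Pprime hL hV hAC hx (dat hZ hx) (dat hW hx) (lieVF X Y x)
  -- curvature decompositions
  have hcZ : g2 L V x (curvVF Γ X Y Z x) (W x)
      = g2 L V x (nablaVF Γ X (nablaVF Γ Y Z) x) (W x)
        - g2 L V x (nablaVF Γ Y (nablaVF Γ X Z) x) (W x)
        - g2 L V x (nablaVF Γ (lieVF X Y) Z x) (W x) := by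
    show g2 L V x (nablaVF Γ X (nablaVF Γ Y Z) x - nablaVF Γ Y (nablaVF Γ X Z) x
      - nablaVF Γ (lieVF X Y) Z x) (W x) = _
    rw [g2_subl, g2_subl]
  have hcW : g2 L V x (Z x) (curvVF Γ X Y W x)
      = g2 L V x (Z x) (nablaVF Γ X (nablaVF Γ Y W) x)
        - g2 L V x (Z x) (nablaVF Γ Y (nablaVF Γ X W) x)
        - g2 L V x (Z x) (nablaVF Γ (lieVF X Y) W x) := by
    show g2 L V x (Z x) (nablaVF Γ X (nablaVF Γ Y W) x - nablaVF Γ Y (nablaVF Γ X W) x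
      - nablaVF Γ (lieVF X Y) W x) = _
    rw [g2_subr, g2_subr]
  have hcV : C3 L V x (curvVF Γ X Y V x) (Z x) (W x)
      = C3 L V x (nablaVF Γ X (nablaVF Γ Y V) x) (Z x) (W x)
        - C3 L V x (nablaVF Γ Y (nablaVF Γ X V) x) (Z x) (W x)
        - C3 L V x (nablaVF Γ (lieVF X Y) V x) (Z x) (W x) := by
    show C3 L V x (nablaVF Γ X (nablaVF Γ Y V) x - nablaVF Γ Y (nablaVF Γ X V) x
      - nablaVF Γ (lieVF X Y) V x) (Z x) (W x) = _
    rw [C3_subl, C3_subl]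
  have hneg : curvVF Γ Y X V x = - curvVF Γ X Y V x := by
    have h2 : lieVF Y X x = -(lieVF X Y x) := by
      unfold lieVF
      rw [neg_sub]
    have h1 : nablaVF Γ (lieVF Y X) V x = - nablaVF Γ (lieVF X Y) V x := by
      show fderiv ℝ V x (lieVF Y X x) + Γ x (lieVF Y X x) (V x)
        = -(fderiv ℝ V x (lieVF X Y x) + Γ x (lieVF X Y x) (V x))
      rw [h2, map_neg, map_neg]
      simp only [ContinuousLinearMap.neg_apply]
      abel
    show nablaVF Γ Y (nablaVF Γ X V) x - nablaVF Γ X (nablaVF Γ Y V) x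
        - nablaVF Γ (lieVF Y X) V x
      = -(nablaVF Γ X (nablaVF Γ Y V) x - nablaVF Γ Y (nablaVF Γ X V) x
        - nablaVF Γ (lieVF X Y) V x)
    rw [h1]
    abel
  -- final assembly
  rw [gF_V hL hV hx, gF_V hL hV hx]
  unfold BTensor
  rw [CartanF_V hL hV hx, hneg, C3_negl,
    g2_symm hL hV hx (curvVF Γ X Y W x) (Z x), hcZ, hcW, hcV]
  rw [e1Y, e2Y] at splitY
  rw [e1X, e2X] at splitX
  rw [splitY, splitX, elie] at star
  rw [ncY, ncX]
  linarith [star]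
end
end
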